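/- arXiv:2510.06112 — 9 statements merged into one kernel-verified Lean document; each statement's English description precedes it below -/
import Mathlib

section
/- Let M be a compact topological space and f : M → ℝ^{k+1} a continuous function. Suppose there exists a continuous map D : ℝ^{k+1}_{0+} → M (where ℝ^{k+1}_{0+} = {t ∈ ℝ^{k+1} : t_0 ≥ 0, t ≠ 0}) such that for every t ∈ ℝ^{k+1}_{0+}, D(t) maximizes x ↦ ⟨t, f(x)⟩ over M. Then the optimal value function V_f(c) = sup { f_0(x) : f_1(x) = c_1, …, f_k(x) = c_k, x ∈ M } (with value −∞ when the feasible set is empty) is concave in c ∈ ℝ^k. -/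
/-!
Put `c'' = λ c + (1 - λ) c'` and `m = λ f₀ x + (1 - λ) f₀ x'` for maximizers `x`, `x'` of the
problems at `c` and `c'`. Weak duality bounds the Lagrangian dual
`ψ s = max_x (f₀ x + ⟪s, f₁..ₖ x - c''⟫)` below by `m`. The maximum is attained at `D (1, s)`,
which depends continuously on `s`, so `ψ` is differentiable with gradient
`G s = f₁..ₖ (D (1, s)) - c''`. A minimizer `p` of `ψ + ε ‖·‖²` has `G p = -2ε p`, so `D (1, p)`
has `f₀ ≥ m` and constraint violation `‖G p‖² ≤ 4ε (ψ 0 - m)`; letting `ε → 0`, compactness of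
`M` yields an exactly feasible point with `f₀ ≥ m`, i.e. `V c'' ≥ m`.
-/

open Filter Topology
open scoped RealInnerProductSpace

theorem IsCompact.exists_mem_le_of_forall_pos {M : Type*} [TopologicalSpace M] {K : Set M}
    (hK : IsCompact K) {g : M → ℝ} (hg : ContinuousOn g K) {r : ℝ}
    (h : ∀ δ > 0, ∃ x ∈ K, g x ≤ r + δ) : ∃ x ∈ K, g x ≤ r := by
  obtain ⟨x₀, hx₀, -⟩ := h 1 one_pos
  obtain ⟨x, hxK, hmin⟩ := hK.exists_isMinOn ⟨x₀, hx₀⟩ hg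
  refine ⟨x, hxK, le_of_forall_pos_le_add fun δ hδ => ?_⟩
  obtain ⟨y, hyK, hy⟩ := h δ hδ
  exact (hmin hyK).trans hy

section Subgradient

variable {E : Type*} [NormedAddCommGroup E] [InnerProductSpace ℝ E]

theorem hasFDerivAt_of_continuous_subgradient {ψ : E → ℝ} {G : E → E} (hG : Continuous G)
    (hsub : ∀ s p, ψ p + ⟪G p, s - p⟫ ≤ ψ s) (p : E) :
    HasFDerivAt ψ (innerSL ℝ (G p)) p := by
  refine .of_isLittleO <| Asymptotics.isLittleO_iff.2 fun ε hε => ?_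
  filter_upwards [Metric.continuousAt_iff'.1 hG.continuousAt ε hε] with s hs
  -- swapping the roles of `s` and `p` in `hsub` bounds the error by `⟪G s - G p, s - p⟫`
  have hlow := hsub s p
  have hupp := hsub p s
  have hcs : |⟪G s - G p, s - p⟫| ≤ ε * ‖s - p‖ :=
    (abs_real_inner_le_norm _ _).trans
      (mul_le_mul_of_nonneg_right (dist_eq_norm (G s) (G p) ▸ hs.le) (norm_nonneg _))
  rw [innerSL_apply_apply, Real.norm_eq_abs, abs_le]
  rw [inner_sub_left] at hcs
  rw [← neg_sub s p, inner_neg_right] at hupp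
  constructor <;> linarith [abs_le.1 hcs]

theorem exists_regularized_critical_point [FiniteDimensional ℝ E] {ψ : E → ℝ} {G : E → E}
    (hG : Continuous G) (hsub : ∀ s p, ψ p + ⟪G p, s - p⟫ ≤ ψ s) {m : ℝ} (hm : ∀ s, m ≤ ψ s)
    {ε : ℝ} (hε : 0 < ε) :
    ∃ p, G p + (2 * ε) • p = 0 ∧ ε * ‖p‖ ^ 2 ≤ ψ 0 - m := by
  have hψ (p : E) := hasFDerivAt_of_continuous_subgradient hG hsub p
  set Φ : E → ℝ := fun s => ψ s + ε * ‖s‖ ^ 2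
  have hΦ (p : E) : HasFDerivAt Φ (innerSL ℝ (G p) + ε • 2 • innerSL ℝ p) p :=
    (hψ p).add ((hasStrictFDerivAt_norm_sq p).hasFDerivAt.const_mul ε)
  have hcoercive : Tendsto Φ (cocompact E) atTop := by
    refine tendsto_atTop_mono (fun s => add_le_add_left (hm s) _) ?_
    exact tendsto_atTop_add_const_left _ _ <| (tendsto_pow_atTop two_ne_zero).comp
      tendsto_norm_cocompact_atTop |>.const_mul_atTop hε
  obtain ⟨p, hp⟩ := (continuous_iff_continuousAt.2 fun p => (hΦ p).continuousAt).exists_forall_le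
    hcoercive
  refine ⟨p, ?_, ?_⟩
  · have hmin : IsLocalMin Φ p := Eventually.of_forall hp
    have hcrit := congrArg (fun L : E →L[ℝ] ℝ => L (G p + (2 * ε) • p))
      (hmin.hasFDerivAt_eq_zero (hΦ p))
    simp only [add_apply, smul_apply, innerSL_apply_apply, zero_apply, smul_eq_mul,
      nsmul_eq_mul, Nat.cast_ofNat] at hcrit
    rw [← inner_self_eq_zero (𝕜 := ℝ), inner_add_left, real_inner_smul_left]
    linarith
  · have hp0 : ψ p + ε * ‖p‖ ^ 2 ≤ ψ 0 + ε * ‖(0 : E)‖ ^ 2 := hp 0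
    rw [norm_zero] at hp0
    linarith [hm p]

section Lagrangian

variable {M : Type*} [TopologicalSpace M] {a : M → E} {b : M → ℝ} {X : E → M}

theorem exists_eq_of_le_lagrangian [FiniteDimensional ℝ E] [CompactSpace M] (ha : Continuous a)
    (hb : Continuous b) (hX : Continuous X)
    (hmax : ∀ s x, b x + ⟪s, a x⟫ ≤ b (X s) + ⟪s, a (X s)⟫) {c : E} {m : ℝ}
    (hm : ∀ s, m ≤ b (X s) + ⟪s, a (X s) - c⟫) : ∃ x, a x = c ∧ m ≤ b x := by
  set ψ : E → ℝ := fun s => b (X s) + ⟪s, a (X s) - c⟫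
  set G : E → E := fun s => a (X s) - c
  have hG : Continuous G := (ha.comp hX).sub continuous_const
  have hsub (s p : E) : ψ p + ⟪G p, s - p⟫ ≤ ψ s := by
    have := hmax s (X p)
    simp only [ψ, G, inner_sub_right, inner_sub_left, real_inner_comm] at this ⊢
    linarith
  set C := ψ 0 - m
  have hC : 0 ≤ C := sub_nonneg.2 (hm 0)
  have happrox (δ : ℝ) (hδ : 0 < δ) : ∃ x ∈ {x | m ≤ b x}, ‖a x - c‖ ^ 2 ≤ 0 + δ := by
    set ε := δ / (4 * C + 1)
    have hε : 0 < ε := by positivity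
    obtain ⟨p, hcrit, hp⟩ := exists_regularized_critical_point hG hsub hm hε
    have hGp : G p = -((2 * ε) • p) := eq_neg_of_add_eq_zero_left hcrit
    refine ⟨X p, ?_, ?_⟩
    · have hψp : m ≤ b (X p) + ⟪p, G p⟫ := hm p
      have hinner : ⟪p, G p⟫ = -(2 * ε) * ‖p‖ ^ 2 := by
        rw [hGp, inner_neg_right, real_inner_smul_right, real_inner_self_eq_norm_sq]; ring
      show m ≤ b (X p)
      nlinarith [sq_nonneg ‖p‖]
    · have h4εC : 4 * ε * C ≤ δ :=
        calc 4 * ε * C ≤ ε * (4 * C + 1) := by nlinarith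
          _ = δ := div_mul_cancel₀ _ (by positivity)
      calc ‖a (X p) - c‖ ^ 2 = ‖G p‖ ^ 2 := rfl
        _ = 4 * ε * (ε * ‖p‖ ^ 2) := by
          rw [hGp, norm_neg, norm_smul, Real.norm_of_nonneg (by positivity)]; ring
        _ ≤ 0 + δ := by nlinarith
  obtain ⟨x, hxK, hx⟩ := ((isClosed_le continuous_const hb).isCompact).exists_mem_le_of_forall_pos
    ((ha.sub continuous_const).norm.pow 2).continuousOn happrox
  refine ⟨x, ?_, hxK⟩
  rw [← sub_eq_zero, ← norm_eq_zero]
  exact pow_eq_zero_iff two_ne_zero |>.1 (le_antisymm hx (sq_nonneg _))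

theorem exists_convexCombination_of_maximizer [FiniteDimensional ℝ E] [CompactSpace M] (ha : Continuous a)
    (hb : Continuous b) (hX : Continuous X)
    (hmax : ∀ s x, b x + ⟪s, a x⟫ ≤ b (X s) + ⟪s, a (X s)⟫) (x x' : M) {t : ℝ} (ht₀ : 0 ≤ t)
    (ht₁ : t ≤ 1) : ∃ y, a y = t • a x + (1 - t) • a x' ∧ t * b x + (1 - t) * b x' ≤ b y := by
  refine exists_eq_of_le_lagrangian ha hb hX hmax fun s => ?_
  have h := mul_le_mul_of_nonneg_left (hmax s x) ht₀
  have h' := mul_le_mul_of_nonneg_left (hmax s x') (sub_nonneg.2 ht₁)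
  rw [inner_sub_right, inner_add_right, real_inner_smul_right, real_inner_smul_right]
  linarith

end Lagrangian

end Subgradient

theorem exists_sSup_le_of_ne_bot {M : Type*} [TopologicalSpace M] [CompactSpace M] {g : M → ℝ}
    (hg : Continuous g) {P : M → Prop} (hP : IsClosed {x | P x})
    (h : sSup {y : EReal | ∃ x, P x ∧ y = g x} ≠ ⊥) :
    ∃ x, P x ∧ sSup {y : EReal | ∃ x, P x ∧ y = g x} ≤ g x := by
  have hne : {x | P x}.Nonempty := by
    by_contra hempty
    refine h (sSup_eq_bot.2 ?_)
    rintro _ ⟨x, hx, rfl⟩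
    exact absurd ⟨x, hx⟩ hempty
  obtain ⟨x, hx, hmax⟩ := hP.isCompact.exists_isMaxOn hne hg.continuousOn
  refine ⟨x, hx, sSup_le ?_⟩
  rintro _ ⟨y, hy, rfl⟩
  exact EReal.coe_le_coe_iff.2 (hmax hy)

theorem sum_finCons_one_mul {k : ℕ} (s : EuclideanSpace ℝ (Fin k)) (v : Fin (k + 1) → ℝ) :
    ∑ i, (Fin.cons 1 s.ofLp : Fin (k + 1) → ℝ) i * v i = v 0 + ⟪s, WithLp.toLp 2 (Fin.tail v)⟫ := by
  simp [Fin.sum_univ_succ, PiLp.inner_apply, Fin.tail, mul_comm]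

theorem finCons_one_nonneg_ne_zero {k : ℕ} (s : Fin k → ℝ) :
    0 ≤ (Fin.cons 1 s : Fin (k + 1) → ℝ) 0 ∧ (Fin.cons 1 s : Fin (k + 1) → ℝ) ≠ 0 :=
  ⟨by simp, fun h => by simpa using congrFun h 0⟩

theorem exists_convexCombination_of_maximizer_finCons {k : ℕ} {M : Type*} [TopologicalSpace M]
    [CompactSpace M] {f : M → Fin (k + 1) → ℝ} (hf : Continuous f)
    {D : {t : Fin (k + 1) → ℝ // 0 ≤ t 0 ∧ t ≠ 0} → M} (hD : Continuous D)
    (hmax : ∀ t : {t : Fin (k + 1) → ℝ // 0 ≤ t 0 ∧ t ≠ 0}, ∀ x : M,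
      ∑ i, t.1 i * f x i ≤ ∑ i, t.1 i * f (D t) i)
    (x x' : M) {t : ℝ} (ht₀ : 0 ≤ t) (ht₁ : t ≤ 1) :
    ∃ y, (∀ i : Fin k, f y i.succ = t * f x i.succ + (1 - t) * f x' i.succ) ∧
      t * f x 0 + (1 - t) * f x' 0 ≤ f y 0 := by
  set a : M → EuclideanSpace ℝ (Fin k) := fun x => WithLp.toLp 2 (Fin.tail (f x))
  set X : EuclideanSpace ℝ (Fin k) → M := fun s => D ⟨_, finCons_one_nonneg_ne_zero s.ofLp⟩
  have ha : Continuous a :=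
    (PiLp.continuous_toLp 2 _).comp (continuous_pi fun i => (continuous_apply i.succ).comp hf)
  have hcons : Continuous fun s : EuclideanSpace ℝ (Fin k) =>
      (Fin.cons 1 s.ofLp : Fin (k + 1) → ℝ) := continuous_const.finCons (PiLp.continuous_ofLp 2 _)
  have hb : Continuous (f · 0) := (continuous_apply 0).comp hf
  have hX : Continuous X := hD.comp (hcons.subtype_mk _)
  obtain ⟨y, hy, hby⟩ := exists_convexCombination_of_maximizer ha hb hX
    (fun s x => by
      simpa only [sum_finCons_one_mul] using hmax ⟨_, finCons_one_nonneg_ne_zero s.ofLp⟩ x)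
    x x' ht₀ ht₁
  exact ⟨y, fun i => by simpa [a, Fin.tail] using congrArg (· i) hy, hby⟩

theorem EReal.coe_mul_add_coe_mul_le {u u' : EReal} {r r' : ℝ} (hu : u ≤ r) (hu' : u' ≤ r')
    {t : ℝ} (ht₀ : 0 ≤ t) (ht₁ : t ≤ 1) :
    (t : EReal) * u + ((1 - t : ℝ) : EReal) * u' ≤ ((t * r + (1 - t) * r' : ℝ) : EReal) :=
  calc (t : EReal) * u + ((1 - t : ℝ) : EReal) * u'
      ≤ (t : EReal) * r + ((1 - t : ℝ) : EReal) * r' :=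
        add_le_add (mul_le_mul_of_nonneg_left hu (EReal.coe_nonneg.2 ht₀))
          (mul_le_mul_of_nonneg_left hu' (EReal.coe_nonneg.2 (by linarith)))
    _ = ((t * r + (1 - t) * r' : ℝ) : EReal) := by norm_cast

theorem stmt_0 {k : ℕ} {M : Type*} [TopologicalSpace M] [CompactSpace M]
    (f : M → Fin (k + 1) → ℝ) (hf : Continuous f)
    (D : {t : Fin (k + 1) → ℝ // 0 ≤ t 0 ∧ t ≠ 0} → M)
    (hD : Continuous D)
    (hmax : ∀ t : {t : Fin (k + 1) → ℝ // 0 ≤ t 0 ∧ t ≠ 0}, ∀ x : M,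
      ∑ i, t.1 i * f x i ≤ ∑ i, t.1 i * f (D t) i)
    (V : (Fin k → ℝ) → EReal)
    (hV : ∀ c, V c = sSup {y : EReal |
      ∃ x : M, (∀ i : Fin k, f x i.succ = c i) ∧ y = ((f x 0 : ℝ) : EReal)}) :
    ∀ (c c' : Fin k → ℝ) (lam : ℝ), 0 ≤ lam → lam ≤ 1 →
      V c ≠ ⊥ → V c' ≠ ⊥ → V c ≠ ⊤ → V c' ≠ ⊤ →
      (lam : EReal) * V c + ((1 - lam : ℝ) : EReal) * V c' ≤
        V (fun i => lam * c i + (1 - lam) * c' i) := by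
  intro c c' lam hlam₀ hlam₁ hc hc' _ _
  have hb : Continuous (f · 0) := (continuous_apply 0).comp hf
  have hfeas (c : Fin k → ℝ) : IsClosed {x | ∀ i : Fin k, f x i.succ = c i} := by
    simp only [Set.ofPred_forall]
    exact isClosed_iInter fun i => isClosed_eq ((continuous_apply _).comp hf) continuous_const
  obtain ⟨x, hx, hVx⟩ := exists_sSup_le_of_ne_bot hb (hfeas c) (hV c ▸ hc)
  obtain ⟨x', hx', hVx'⟩ := exists_sSup_le_of_ne_bot hb (hfeas c') (hV c' ▸ hc')
  obtain ⟨y, hy, hby⟩ := exists_convexCombination_of_maximizer_finCons hf hD hmax x x' hlam₀ hlam₁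
  rw [← hV c] at hVx
  rw [← hV c'] at hVx'
  calc (lam : EReal) * V c + ((1 - lam : ℝ) : EReal) * V c'
      ≤ ((lam * f x 0 + (1 - lam) * f x' 0 : ℝ) : EReal) :=
        EReal.coe_mul_add_coe_mul_le hVx hVx' hlam₀ hlam₁
    _ ≤ ((f y 0 : ℝ) : EReal) := EReal.coe_le_coe_iff.2 hby
    _ ≤ V (fun i => lam * c i + (1 - lam) * c' i) :=
      hV _ ▸ le_sSup ⟨y, fun i => by rw [hy, hx, hx'], rfl⟩
end

section
/- Let M be a compact topological space and f : M → ℝ^{k+1} continuous. If f admits a Lagrangian dual section (a continuous D : ℝ^{k+1}_{0+} → M with D(t) ∈ argmax_{x ∈ M} ⟨t, f(x)⟩ for all t), then for every c ∈ ℝ^k, sup { f_0(x) : f_i(x) = c_i for i = 1,…,k, x ∈ M } = sup { y_0 : y_i = c_i for i = 1,…,k, y ∈ conv(f(M)) }. -/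
/-!
Write `h(ν) = max_x (f₀ x + ⟪ν, f' x⟫)` for the dual function of the constraints `f' x = c`,
where `f' = (f₁, …, f_k)`; the dual section gives the maximiser `D (1, ν)`, and
`ν ↦ f' (D (1, ν))` is a continuous subgradient of `h`. A point `y` of the convex hull with
`y' = c` satisfies the weak duality bound `y₀ + ⟪ν, c⟫ ≤ h ν`. Adding `ε √(1 + ‖ν‖²)` makes
`h ν - ⟪ν, c⟫` coercive while keeping a continuous subgradient, so at a minimiser `ν₀` this
subgradient vanishes: `x = D (1, ν₀)` satisfies `‖f' x - c‖ ≤ ε` and `y₀ ≤ f₀ x`.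
Compactness of `M` then lets `ε → 0`.
-/

open scoped RealInnerProductSpace
open Filter Set Topology

section JapaneseBracket

variable {E : Type*} [NormedAddCommGroup E]

noncomputable def japaneseBracket (x : E) : ℝ := √(1 + ‖x‖ ^ 2)

lemma japaneseBracket_pos (x : E) : 0 < japaneseBracket x := Real.sqrt_pos.2 (by positivity)

lemma sq_japaneseBracket (x : E) : japaneseBracket x ^ 2 = 1 + ‖x‖ ^ 2 :=
  Real.sq_sqrt (by positivity)

lemma norm_le_japaneseBracket (x : E) : ‖x‖ ≤ japaneseBracket x :=
  Real.le_sqrt_of_sq_le (by linarith)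

@[fun_prop]
lemma continuous_japaneseBracket : Continuous (japaneseBracket : E → ℝ) := by
  unfold japaneseBracket; fun_prop

variable [NormedSpace ℝ E]

noncomputable def gradJapaneseBracket (x : E) : E := (japaneseBracket x)⁻¹ • x

@[fun_prop]
lemma continuous_gradJapaneseBracket : Continuous (gradJapaneseBracket : E → E) :=
  (continuous_japaneseBracket.inv₀ fun x => (japaneseBracket_pos x).ne').smul continuous_id

lemma norm_gradJapaneseBracket_le_one (x : E) : ‖gradJapaneseBracket x‖ ≤ 1 := by
  rw [gradJapaneseBracket, norm_smul, norm_inv, Real.norm_of_nonneg (japaneseBracket_pos x).le,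
    inv_mul_le_one₀ (japaneseBracket_pos x)]
  exact norm_le_japaneseBracket x

end JapaneseBracket

section InnerProductSpace

variable {E : Type*} [NormedAddCommGroup E] [InnerProductSpace ℝ E]

lemma inner_self_gradJapaneseBracket_nonneg (x : E) : 0 ≤ ⟪x, gradJapaneseBracket x⟫ := by
  rw [gradJapaneseBracket, real_inner_smul_right, real_inner_self_eq_norm_sq]
  exact mul_nonneg (inv_nonneg.2 (japaneseBracket_pos x).le) (sq_nonneg _)

lemma japaneseBracket_add_inner_grad_le (x y : E) :
    japaneseBracket x + ⟪y - x, gradJapaneseBracket x⟫ ≤ japaneseBracket y := by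
  have hx := japaneseBracket_pos x
  have hy := japaneseBracket_pos y
  -- Cauchy–Schwarz for the vectors `(1, x)` and `(1, y)`
  have hxy : 1 + ⟪y, x⟫ ≤ japaneseBracket x * japaneseBracket y := by
    have := real_inner_le_norm y x
    nlinarith [sq_japaneseBracket x, sq_japaneseBracket y, sq_nonneg (‖x‖ - ‖y‖), mul_pos hx hy,
      norm_nonneg x, norm_nonneg y]
  have hdiff : japaneseBracket y - (japaneseBracket x + ⟪y - x, gradJapaneseBracket x⟫)
      = (japaneseBracket x)⁻¹ * (japaneseBracket x * japaneseBracket y - (1 + ⟪y, x⟫)) := by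
    rw [gradJapaneseBracket, real_inner_smul_right, inner_sub_left, real_inner_self_eq_norm_sq]
    field_simp
    rw [sq_japaneseBracket]
    ring
  rw [← sub_nonneg, hdiff]
  exact mul_nonneg (inv_nonneg.2 hx.le) (by linarith)

lemma eq_zero_of_forall_inner_sub_nonneg {g : E → E} {x₀ : E} (hg : ContinuousAt g x₀)
    (h : ∀ x, 0 ≤ ⟪x - x₀, g x⟫) : g x₀ = 0 := by
  have hdir : ∀ e, 0 ≤ ⟪e, g x₀⟫ := by
    intro e
    have hline : ContinuousAt (fun s : ℝ => ⟪e, g (x₀ + s • e)⟫) 0 :=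
      continuousAt_const.inner (ContinuousAt.comp_of_eq hg (by fun_prop) (by simp))
    have hlim : Tendsto (fun s : ℝ => ⟪e, g (x₀ + s • e)⟫) (𝓝[>] 0) (𝓝 ⟪e, g x₀⟫) := by
      simpa using hline.tendsto.mono_left nhdsWithin_le_nhds
    refine ge_of_tendsto hlim (eventually_nhdsWithin_of_forall fun s (hs : 0 < s) => ?_)
    have := h (x₀ + s • e)
    rw [add_sub_cancel_left, real_inner_smul_left] at this
    exact (mul_nonneg_iff_of_pos_left hs).1 this
  have := hdir (-g x₀)
  rw [inner_neg_left, real_inner_self_eq_norm_sq, neg_nonneg] at this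
  exact norm_eq_zero.1 (pow_eq_zero_iff two_ne_zero |>.1 (le_antisymm this (sq_nonneg _)))

lemma exists_approx_of_dual_bound [ProperSpace E] {u : E → ℝ} {v : E → E}
    (hu : Continuous u) (hv : Continuous v)
    (hmax : ∀ μ ν, u μ + ⟪ν, v μ⟫ ≤ u ν + ⟪ν, v ν⟫) {c : E} {y₀ : ℝ}
    (hdual : ∀ ν, y₀ + ⟪ν, c⟫ ≤ u ν + ⟪ν, v ν⟫) {ε : ℝ} (hε : 0 < ε) :
    ∃ ν, ‖v ν - c‖ ≤ ε ∧ y₀ ≤ u ν := by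
  set φ : E → ℝ := fun ν => u ν + ⟪ν, v ν⟫ - ⟪ν, c⟫ + ε * japaneseBracket ν
  set Ψ : E → E := fun ν => v ν - c + ε • gradJapaneseBracket ν
  have hφ : Continuous φ := by fun_prop
  have hcoercive : Tendsto φ (cocompact E) atTop := by
    refine tendsto_atTop_mono (fun ν => ?_)
      (tendsto_atTop_add_const_left _ y₀ (tendsto_norm_cocompact_atTop.const_mul_atTop hε))
    nlinarith [hdual ν, norm_le_japaneseBracket ν]
  obtain ⟨ν₀, hν₀⟩ := hφ.exists_forall_le hcoercive
  have hsubgrad : ∀ ν ν', φ ν + ⟪ν' - ν, Ψ ν⟫ ≤ φ ν' := by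
    intro ν ν'
    have := mul_le_mul_of_nonneg_left (japaneseBracket_add_inner_grad_le ν ν') hε.le
    rw [inner_sub_left, mul_add, mul_sub] at this
    simp only [φ, Ψ, inner_add_right, inner_sub_right, inner_sub_left, real_inner_smul_right]
    linarith [hmax ν ν']
  have hΨ : Ψ ν₀ = 0 := by
    refine eq_zero_of_forall_inner_sub_nonneg (by fun_prop) fun ν => ?_
    have := hsubgrad ν ν₀
    rw [← neg_sub, inner_neg_left] at this
    linarith [hν₀ ν]
  have hv : v ν₀ - c = -(ε • gradJapaneseBracket ν₀) := eq_neg_of_add_eq_zero_left hΨ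
  refine ⟨ν₀, ?_, ?_⟩
  · rw [hv, norm_neg, norm_smul, Real.norm_of_nonneg hε.le]
    exact mul_le_of_le_one_right hε.le (norm_gradJapaneseBracket_le_one ν₀)
  · have hvc : ⟪ν₀, v ν₀⟫ = ⟪ν₀, c⟫ - ε * ⟪ν₀, gradJapaneseBracket ν₀⟫ := by
      rw [sub_eq_iff_eq_add'.1 hv, inner_add_right, inner_neg_right, real_inner_smul_right]
      ring
    nlinarith [hdual ν₀, inner_self_gradJapaneseBracket_nonneg ν₀]

lemma exists_eq_of_dual_bound {M : Type*} [TopologicalSpace M] [CompactSpace M] [ProperSpace E]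
    {F₀ : M → ℝ} {F : M → E} {D : E → M} (hF₀ : Continuous F₀) (hF : Continuous F)
    (hD : Continuous D) (hmax : ∀ ν x, F₀ x + ⟪ν, F x⟫ ≤ F₀ (D ν) + ⟪ν, F (D ν)⟫)
    {c : E} {y₀ : ℝ} (hdual : ∀ ν, y₀ + ⟪ν, c⟫ ≤ F₀ (D ν) + ⟪ν, F (D ν)⟫) :
    ∃ x, F x = c ∧ y₀ ≤ F₀ x := by
  have hnear : ∀ ε > 0, ∃ x, ‖F x - c‖ ≤ ε ∧ y₀ ≤ F₀ x := fun ε hε =>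
    have ⟨ν, hν⟩ := exists_approx_of_dual_bound (hF₀.comp hD) (hF.comp hD)
      (fun μ ν => hmax ν (D μ)) hdual hε
    ⟨D ν, hν⟩
  have hK : IsCompact {x | y₀ ≤ F₀ x} := (isClosed_le continuous_const hF₀).isCompact
  obtain ⟨x₀, hx₀K, hx₀⟩ := hK.exists_isMinOn
    (let ⟨x, _, hx⟩ := hnear 1 one_pos; ⟨x, hx⟩) (hF.sub continuous_const).norm.continuousOn
  refine ⟨x₀, sub_eq_zero.1 (norm_le_zero_iff.1 (le_of_forall_pos_le_add fun ε hε => ?_)), hx₀K⟩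
  obtain ⟨x, hxε, hxK⟩ := hnear ε hε
  simpa using (hx₀ hxK).trans hxε

end InnerProductSpace

section UnitMultiplier

variable {k : ℕ}

def unitMultiplier (ν : EuclideanSpace ℝ (Fin k)) :
    {t : Fin (k + 1) → ℝ // 0 ≤ t 0 ∧ t ≠ 0} :=
  ⟨Fin.cons 1 ν.ofLp, by simp, fun h => by simpa using congrFun h 0⟩

lemma continuous_unitMultiplier : Continuous (unitMultiplier (k := k)) :=
  ((continuous_const (y := (1 : ℝ))).finCons
    (PiLp.continuous_ofLp 2 fun _ : Fin k => ℝ)).subtype_mk _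

lemma sum_unitMultiplier_mul (ν : EuclideanSpace ℝ (Fin k)) (z : Fin (k + 1) → ℝ) :
    ∑ i, (unitMultiplier ν).1 i * z i = z 0 + ⟪ν, WithLp.toLp 2 (Fin.tail z)⟫ := by
  simp [unitMultiplier, Fin.sum_univ_succ, PiLp.inner_apply, Fin.tail, mul_comm]

end UnitMultiplier

theorem stmt_1 {k : ℕ} {M : Type*} [TopologicalSpace M] [CompactSpace M]
    (f : M → Fin (k + 1) → ℝ) (hf : Continuous f)
    (D : {t : Fin (k + 1) → ℝ // 0 ≤ t 0 ∧ t ≠ 0} → M)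
    (hD : Continuous D)
    (hmax : ∀ t : {t : Fin (k + 1) → ℝ // 0 ≤ t 0 ∧ t ≠ 0}, ∀ x : M,
      ∑ i, t.1 i * f x i ≤ ∑ i, t.1 i * f (D t) i) :
    ∀ c : Fin k → ℝ,
      sSup {y : EReal | ∃ x : M, (∀ i : Fin k, f x i.succ = c i) ∧ y = ((f x 0 : ℝ) : EReal)} =
      sSup {v : EReal | ∃ y ∈ convexHull ℝ (Set.range f),
        (∀ i : Fin k, y i.succ = c i) ∧ v = ((y 0 : ℝ) : EReal)} := by
  intro c
  refine le_antisymm (sSup_le_sSup ?_) (sSup_le ?_)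
  · rintro _ ⟨x, hxc, rfl⟩
    exact ⟨f x, subset_convexHull ℝ _ (mem_range_self x), hxc, rfl⟩
  rintro _ ⟨y, hy, hyc, rfl⟩
  have hdual : ∀ t : {t : Fin (k + 1) → ℝ // 0 ≤ t 0 ∧ t ≠ 0},
      ∑ i, t.1 i * y i ≤ ∑ i, t.1 i * f (D t) i := fun t =>
    convexHull_min (range_subset_iff.2 fun x => hmax t x)
      (convex_halfSpace_le (dotProductBilin ℝ ℝ t.1).isLinear _) hy
  have htail : Fin.tail y = c := funext hyc
  obtain ⟨x, hxc, hx₀⟩ := exists_eq_of_dual_bound (F₀ := fun x => f x 0)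
    (F := fun x => WithLp.toLp 2 (Fin.tail (f x))) (D := fun ν => D (unitMultiplier ν))
    (by fun_prop) (by fun_prop) (hD.comp continuous_unitMultiplier)
    (fun ν x => by simpa only [sum_unitMultiplier_mul] using hmax (unitMultiplier ν) x)
    (fun ν => by simpa only [sum_unitMultiplier_mul, htail] using hdual (unitMultiplier ν))
  exact le_sSup_of_le ⟨x, congrFun (WithLp.toLp_injective 2 hxc), rfl⟩
    (EReal.coe_le_coe_iff.2 hx₀)
end

section
/- Let C ⊆ ℝ^k be a compact convex set with nonempty interior, and let ∂φ : S^{k−1} → ∂C be a continuous map such that for each unit vector t ∈ S^{k−1}, ∂φ(t) maximizes the linear function y ↦ ⟨t, y⟩ over C. Then ∂φ is a homotopy equivalence between S^{k−1} and the boundary ∂C. -/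
/-!
Fix a point `x₀` in the interior of `C`. Rescaling the gauge of `C - x₀` to that of the unit ball
gives a homeomorphism `r : ∂C ≃ₜ S^{k-1}` sending `y` to a positive multiple of `y - x₀`.
Since `x₀` is interior, `⟪t, φ t - x₀⟫ > 0`, so `r (φ t)` is never antipodal to `t`; hence
`r ∘ φ` is homotopic to the identity through normalised straight segments. Conjugating by the
homeomorphism `r` gives `φ ∘ r ≃ id` as well.
-/

open RealInnerProductSpace Metric Set Filter Topology

theorem zero_notMem_segment_of_norm_eq {E : Type*} [NormedAddCommGroup E] [NormedSpace ℝ E]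
    {u v : E} (huv : ‖u‖ = ‖v‖) (h : u ≠ -v) : (0 : E) ∉ segment ℝ u v := by
  rw [mem_segment_iff_sameRay, zero_sub, sub_zero, sameRay_iff_of_norm_eq (by rwa [norm_neg])]
  exact fun h' => h (neg_eq_iff_eq_neg.mp h')

theorem ContinuousMap.homotopic_of_forall_ne_neg {X E : Type*} [TopologicalSpace X]
    [NormedAddCommGroup E] [NormedSpace ℝ E] (f g : C(X, sphere (0 : E) 1))
    (hfg : ∀ x, (f x : E) ≠ -g x) : f.Homotopic g :=
  ⟨{ toFun p := (homeomorphUnitSphereProd E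
        ⟨AffineMap.lineMap (f p.2 : E) (g p.2) (p.1 : ℝ), ne_of_mem_of_not_mem
          (lineMap_mem_segment ℝ _ _ p.1.2) (zero_notMem_segment_of_norm_eq (by simp) (hfg p.2))⟩).1
     continuous_toFun := by fun_prop
     map_zero_left x := by ext; simp
     map_one_left x := by ext; simp }⟩

theorem Homeomorph.image_trans {X Y Z : Type*} [TopologicalSpace X] [TopologicalSpace Y]
    [TopologicalSpace Z] (f : X ≃ₜ Y) (g : Y ≃ₜ Z) (s : Set X) :
    f.trans g '' s = g '' (f '' s) :=
  (image_image g f s).symm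

theorem Homeomorph.homotopic_comp_id_of_comp_homotopic_id {X Y : Type*} [TopologicalSpace X]
    [TopologicalSpace Y] (e : X ≃ₜ Y) {φ : C(Y, X)}
    (h : ((e : C(X, Y)).comp φ).Homotopic (ContinuousMap.id Y)) :
    (φ.comp e).Homotopic (ContinuousMap.id X) := by
  have hconj := (ContinuousMap.Homotopic.refl (e.symm : C(Y, X))).comp
    (h.comp (ContinuousMap.Homotopic.refl (e : C(X, Y))))
  convert hconj using 1 <;> ext x <;> simp

theorem inner_lt_of_mem_interior_of_forall_inner_le {E : Type*} [NormedAddCommGroup E]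
    [InnerProductSpace ℝ E] {C : Set E} {x₀ z t : E} (hx₀ : x₀ ∈ interior C) (ht : t ≠ 0)
    (hz : ∀ y ∈ C, ⟪t, y⟫ ≤ ⟪t, z⟫) : ⟪t, x₀⟫ < ⟪t, z⟫ := by
  have hray : Tendsto (fun δ : ℝ => x₀ + δ • t) (𝓝[>] 0) (𝓝 x₀) :=
    (Continuous.tendsto' (by fun_prop) 0 x₀ (by simp)).mono_left nhdsWithin_le_nhds
  obtain ⟨δ, hδC, hδ⟩ :=
    ((hray.eventually (mem_interior_iff_mem_nhds.mp hx₀)).and self_mem_nhdsWithin).exists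
  have ht' : 0 < ‖t‖ := norm_pos_iff.mpr ht
  calc ⟪t, x₀⟫ < ⟪t, x₀⟫ + δ * ‖t‖ ^ 2 := lt_add_of_pos_right _ (by positivity)
    _ = ⟪t, x₀ + δ • t⟫ := by rw [inner_add_right, inner_smul_right, real_inner_self_eq_norm_sq]
    _ ≤ ⟪t, z⟫ := hz _ hδC

theorem SameRay.inner_pos {E : Type*} [NormedAddCommGroup E] [InnerProductSpace ℝ E]
    {x y t : E} (h : SameRay ℝ x y) (hx : 0 < ⟪t, x⟫) (hy : y ≠ 0) : 0 < ⟪t, y⟫ := by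
  obtain ⟨c, hc, rfl⟩ := h.exists_pos_left (by rintro rfl; simp at hx) hy
  rw [inner_smul_right]
  positivity

section ConvexBody

variable {E : Type*} [NormedAddCommGroup E] [NormedSpace ℝ E] {C : Set E} {x₀ : E}

noncomputable def Convex.homeomorphClosedBall (hconv : Convex ℝ C) (hC : IsCompact C)
    (hx₀ : x₀ ∈ interior C) : E ≃ₜ E :=
  (Homeomorph.addLeft (-x₀)).trans <|
    gaugeRescaleHomeomorph ((-x₀ + ·) '' C) (ball 0 1) (hconv.translate (-x₀))
      (by
        rw [← mem_interior_iff_mem_nhds, ← Homeomorph.coe_addLeft, ← Homeomorph.image_interior]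
        exact ⟨x₀, hx₀, neg_add_cancel x₀⟩)
      (NormedSpace.isVonNBounded_of_isBounded _ (hC.image (continuous_const_add _)).isBounded)
      (convex_ball 0 1) (ball_mem_nhds 0 one_pos) (NormedSpace.isVonNBounded_ball _ _ _)

theorem Convex.sameRay_homeomorphClosedBall (hconv : Convex ℝ C) (hC : IsCompact C)
    (hx₀ : x₀ ∈ interior C) (y : E) :
    SameRay ℝ (y - x₀) (hconv.homeomorphClosedBall hC hx₀ y) := by
  rw [sub_eq_neg_add]
  exact SameRay.sameRay_nonneg_smul_right _ (div_nonneg (gauge_nonneg _) (gauge_nonneg _))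

theorem Convex.image_homeomorphClosedBall (hconv : Convex ℝ C) (hC : IsCompact C)
    (hx₀ : x₀ ∈ interior C) : hconv.homeomorphClosedBall hC hx₀ '' C = closedBall 0 1 := by
  have hclosed : IsClosed ((-x₀ + ·) '' C) := (hC.image (continuous_const_add _)).isClosed
  rw [Convex.homeomorphClosedBall, Homeomorph.image_trans, Homeomorph.coe_addLeft]
  nth_rw 2 [← hclosed.closure_eq]
  rw [image_gaugeRescaleHomeomorph_closure, closure_ball 0 one_ne_zero]

theorem Convex.image_frontier_homeomorphClosedBall (hconv : Convex ℝ C) (hC : IsCompact C)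
    (hx₀ : x₀ ∈ interior C) : hconv.homeomorphClosedBall hC hx₀ '' frontier C = sphere 0 1 := by
  rw [Homeomorph.image_frontier, hconv.image_homeomorphClosedBall,
    frontier_closedBall 0 one_ne_zero]

noncomputable def Convex.frontierHomeomorphSphere (hconv : Convex ℝ C) (hC : IsCompact C)
    (hx₀ : x₀ ∈ interior C) : frontier C ≃ₜ sphere (0 : E) 1 :=
  ((hconv.homeomorphClosedBall hC hx₀).image (frontier C)).trans
    (Homeomorph.setCongr (hconv.image_frontier_homeomorphClosedBall hC hx₀))

theorem Convex.sameRay_frontierHomeomorphSphere (hconv : Convex ℝ C) (hC : IsCompact C)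
    (hx₀ : x₀ ∈ interior C) (y : frontier C) :
    SameRay ℝ ((y : E) - x₀) (hconv.frontierHomeomorphSphere hC hx₀ y) :=
  hconv.sameRay_homeomorphClosedBall hC hx₀ y

end ConvexBody

theorem stmt_4 {k : ℕ} (C : Set (EuclideanSpace ℝ (Fin k)))
    (hC : IsCompact C) (hconv : Convex ℝ C) (hint : (interior C).Nonempty)
    (φ : C(Metric.sphere (0 : EuclideanSpace ℝ (Fin k)) 1, frontier C))
    (hmax : ∀ t : Metric.sphere (0 : EuclideanSpace ℝ (Fin k)) 1, ∀ y ∈ C,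
      ⟪(t : EuclideanSpace ℝ (Fin k)), y⟫ ≤
        ⟪(t : EuclideanSpace ℝ (Fin k)), ((φ t : frontier C) : EuclideanSpace ℝ (Fin k))⟫) :
    ∃ h : C(frontier C, Metric.sphere (0 : EuclideanSpace ℝ (Fin k)) 1),
      (φ.comp h).Homotopic (ContinuousMap.id _) ∧
      (h.comp φ).Homotopic (ContinuousMap.id _) := by
  obtain ⟨x₀, hx₀⟩ := hint
  set r := hconv.frontierHomeomorphSphere hC hx₀
  have hpos (t : sphere (0 : EuclideanSpace ℝ (Fin k)) 1) :
      0 < ⟪(t : EuclideanSpace ℝ (Fin k)), r (φ t)⟫ := by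
    have hx₀t := inner_lt_of_mem_interior_of_forall_inner_le hx₀ (ne_zero_of_mem_unit_sphere t)
      (hmax t)
    refine (hconv.sameRay_frontierHomeomorphSphere hC hx₀ (φ t)).inner_pos ?_
      (ne_zero_of_mem_unit_sphere _)
    rwa [inner_sub_right, sub_pos]
  have hrφ : ((r : C(frontier C, _)).comp φ).Homotopic (ContinuousMap.id _) := by
    refine ContinuousMap.homotopic_of_forall_ne_neg _ _ fun t hneg => (hpos t).not_ge ?_
    simp [show (r (φ t) : EuclideanSpace ℝ (Fin k)) = -t from hneg]
  exact ⟨r, r.homotopic_comp_id_of_comp_homotopic_id hrφ, hrφ⟩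
end

section
/- Let M be a compact topological space and f : M → ℝ² continuous. Suppose for every t ∈ ℝ²_{0+} = {t ∈ ℝ² : t_0 ≥ 0, t ≠ 0} the set M_t = argmax_{x ∈ M} ⟨t, f(x)⟩ is connected. Then the function V_f(c) = sup { f_0(x) : f_1(x) = c, x ∈ M } is concave on ℝ, and moreover V_f(c) = sup { y_0 : y_1 = c, y ∈ conv(f(M)) } for all c. -/
/-!
Tilting the objective to `f₁ + s f₂` (the direction `t = (1, s)`), let `z` lie strictly between
`f₂ p` and `f₂ q`. The maxima of `f₁ + s f₂` over `{f₂ ≤ z}` and over `{f₂ ≥ z}` depend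
continuously on `s`, and for `s → ±∞` each one eventually dominates the other, so by the
intermediate value theorem they agree for some `s`. The connected set of global maximisers of
`f₁ + s f₂` then meets both halves, hence the level `f₂ = z`, and such a maximiser lies above the
chord from `f p` to `f q`. So the hypograph of `V` is convex: this is the concavity of `V`, and
as the hypograph contains `f(M)` it contains `conv f(M)`, whence the second formula for `V`.
-/

open Set

section

variable {M : Type*} {φ ψ : M → ℝ}

/-- Value in the first coordinate, level in the second; for compact `M` this is the hypograph of
`fiberSup φ ψ`. -/
def hypograph (φ ψ : M → ℝ) : Set (ℝ × ℝ) := {y | ∃ x, ψ x = y.2 ∧ y.1 ≤ φ x}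

noncomputable def fiberSup (φ ψ : M → ℝ) (c : ℝ) : EReal := sSup {y : EReal | ∃ x, ψ x = c ∧ y = φ x}

lemma fiberSup_eq_sSup_of_subset_hypograph {S : Set (ℝ × ℝ)} (hS : ∀ x, (φ x, ψ x) ∈ S)
    (hSH : S ⊆ hypograph φ ψ) (c : ℝ) :
    fiberSup φ ψ c = sSup {v : EReal | ∃ y ∈ S, y.2 = c ∧ v = y.1} := by
  refine le_antisymm (sSup_le_sSup ?_) (sSup_le ?_)
  · rintro _ ⟨x, hx, rfl⟩
    exact ⟨_, hS x, hx, rfl⟩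
  · rintro _ ⟨y, hy, rfl, rfl⟩
    obtain ⟨x, hx, hyx⟩ := hSH hy
    exact (EReal.coe_le_coe_iff.2 hyx).trans (le_sSup ⟨x, hx, rfl⟩)

section Topology

variable [TopologicalSpace M]

lemma IsCompact.exists_sSup_image_add_mul_le (hφ : Continuous φ) (hψ : Continuous ψ)
    {K L : Set M} (hK : IsCompact K) (hL : IsCompact L) (hKne : K.Nonempty) {z : ℝ}
    (hKz : ∀ x ∈ K, ψ x ≤ z) {q : M} (hqL : q ∈ L) (hzq : z < ψ q) :
    ∃ s : ℝ, sSup ((fun x => φ x + s * ψ x) '' K) ≤ sSup ((fun x => φ x + s * ψ x) '' L) := by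
  obtain ⟨C, hC⟩ := hK.bddAbove_image hφ.continuousOn
  -- steep enough that the tilted value at `q` beats the bound `C + s z` on `K`
  set s := |C - φ q| / (ψ q - z)
  have hs : 0 ≤ s := div_nonneg (abs_nonneg _) (sub_nonneg.2 hzq.le)
  have hsz : s * (ψ q - z) = |C - φ q| := div_mul_cancel₀ _ (sub_ne_zero.2 hzq.ne')
  refine ⟨s, ?_⟩
  calc sSup ((fun x => φ x + s * ψ x) '' K) ≤ C + s * z := csSup_le (hKne.image _) ?_
    _ ≤ φ q + s * ψ q := by linarith [le_abs_self (C - φ q)]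
    _ ≤ _ := le_csSup (hL.bddAbove_image (by fun_prop)) (mem_image_of_mem _ hqL)
  rintro _ ⟨x, hx, rfl⟩
  linarith [hC (mem_image_of_mem φ hx), mul_le_mul_of_nonneg_left (hKz x hx) hs]

lemma exists_isMax_add_mul_of_lt [CompactSpace M] (hφ : Continuous φ) (hψ : Continuous ψ)
    {p q : M} {z : ℝ} (hp : ψ p < z) (hq : z < ψ q) :
    ∃ s a b, (∀ y, φ y + s * ψ y ≤ φ a + s * ψ a) ∧ (∀ y, φ y + s * ψ y ≤ φ b + s * ψ b) ∧
      ψ a ≤ z ∧ z ≤ ψ b := by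
  set g : ℝ → M → ℝ := fun s x => φ x + s * ψ x
  have hg : Continuous ↿g := by fun_prop
  set Klo := {x | ψ x ≤ z}
  set Khi := {x | z ≤ ψ x}
  have hKlo : IsCompact Klo := (isClosed_le hψ continuous_const).isCompact
  have hKhi : IsCompact Khi := (isClosed_le continuous_const hψ).isCompact
  set h := fun s => sSup (g s '' Khi) - sSup (g s '' Klo)
  have hh : Continuous h := (hKhi.continuous_sSup hg).sub (hKlo.continuous_sSup hg)
  obtain ⟨s₁, hs₁⟩ := hKlo.exists_sSup_image_add_mul_le hφ hψ hKhi ⟨p, hp.le⟩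
    (fun x hx => hx) (show q ∈ Khi from hq.le) hq
  obtain ⟨s₂, hs₂⟩ := hKhi.exists_sSup_image_add_mul_le hφ hψ.neg hKlo ⟨q, hq.le⟩
    (z := -z) (fun x hx => neg_le_neg hx) (show p ∈ Klo from hp.le) (neg_lt_neg hp)
  have hneg : (fun x => φ x + s₂ * (-ψ) x) = g (-s₂) := by funext x; simp [g]
  rw [hneg] at hs₂
  obtain ⟨s, hs⟩ : (0 : ℝ) ∈ range h :=
    intermediate_value_univ (-s₂) s₁ hh ⟨by simp [h, hs₂], by simp [h, g, hs₁]⟩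
  have hgs : Continuous (g s) := by fun_prop
  obtain ⟨a, ha, hsa, hamax⟩ := hKlo.exists_sSup_image_eq_and_ge ⟨p, hp.le⟩ hgs.continuousOn
  obtain ⟨b, hb, hsb, hbmax⟩ := hKhi.exists_sSup_image_eq_and_ge ⟨q, hq.le⟩ hgs.continuousOn
  have hab : g s a = g s b := by simp only [h, sub_eq_zero] at hs; rw [← hsa, ← hsb, hs]
  have hmax : ∀ y, g s y ≤ g s a := fun y =>
    (le_total (ψ y) z).elim (hamax y) fun hy => hab ▸ hbmax y hy
  exact ⟨s, a, b, hmax, fun y => (hmax y).trans_eq hab, ha, hb⟩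

lemma exists_eq_and_isMax_add_mul_of_lt [CompactSpace M] (hφ : Continuous φ) (hψ : Continuous ψ)
    (hconn : ∀ s : ℝ, IsPreconnected {x | ∀ y, φ y + s * ψ y ≤ φ x + s * ψ x})
    {p q : M} {z : ℝ} (hp : ψ p < z) (hq : z < ψ q) :
    ∃ s x, ψ x = z ∧ ∀ y, φ y + s * ψ y ≤ φ x + s * ψ x := by
  obtain ⟨s, a, b, ha, hb, haz, hzb⟩ := exists_isMax_add_mul_of_lt hφ hψ hp hq
  obtain ⟨x, hx, hxz⟩ := (hconn s).intermediate_value ha hb hψ.continuousOn ⟨haz, hzb⟩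
  exact ⟨s, x, hxz, hx⟩

lemma exists_eq_and_add_le_of_lt [CompactSpace M] (hφ : Continuous φ) (hψ : Continuous ψ)
    (hconn : ∀ s : ℝ, IsPreconnected {x | ∀ y, φ y + s * ψ y ≤ φ x + s * ψ x})
    {p q : M} (hpq : ψ p < ψ q) {a b : ℝ} (ha : 0 < a) (hb : 0 < b) (hab : a + b = 1) :
    ∃ x, ψ x = a * ψ p + b * ψ q ∧ a * φ p + b * φ q ≤ φ x := by
  obtain rfl : b = 1 - a := by linarith
  obtain ⟨s, x, hxz, hx⟩ := exists_eq_and_isMax_add_mul_of_lt hφ hψ hconn (p := p) (q := q)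
    (z := a * ψ p + (1 - a) * ψ q) (by nlinarith) (by nlinarith)
  refine ⟨x, hxz, ?_⟩
  have hxp := hx p
  have hxq := hx q
  rw [hxz] at hxp hxq
  nlinarith [mul_le_mul_of_nonneg_left hxp ha.le, mul_le_mul_of_nonneg_left hxq hb.le]

theorem convex_hypograph_of_isPreconnected [CompactSpace M] (hφ : Continuous φ) (hψ : Continuous ψ)
    (hconn : ∀ s : ℝ, IsPreconnected {x | ∀ y, φ y + s * ψ y ≤ φ x + s * ψ x}) :
    Convex ℝ (hypograph φ ψ) := by
  refine convex_iff_forall_pos.2 ?_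
  rintro u ⟨p, hpu, hup⟩ v ⟨q, hqv, hvq⟩ a b ha hb hab
  suffices ∃ x, ψ x = a * ψ p + b * ψ q ∧ a * φ p + b * φ q ≤ φ x by
    obtain ⟨x, hx, hxφ⟩ := this
    refine ⟨x, by simp [hx, hpu, hqv], ?_⟩
    simp only [Prod.fst_add, Prod.smul_fst, smul_eq_mul]
    nlinarith
  rcases lt_trichotomy (ψ p) (ψ q) with hlt | heq | hgt
  · exact exists_eq_and_add_le_of_lt hφ hψ hconn hlt ha hb hab
  · obtain rfl : b = 1 - a := by linarith
    rcases le_total (φ p) (φ q) with hle | hle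
    · exact ⟨q, by rw [heq]; ring, by nlinarith⟩
    · exact ⟨p, by rw [heq]; ring, by nlinarith⟩
  · obtain ⟨x, hx, hxφ⟩ := exists_eq_and_add_le_of_lt hφ hψ hconn hgt hb ha ((add_comm b a).trans hab)
    exact ⟨x, by rw [hx, add_comm], by linarith⟩

lemma exists_eq_fiberSup_of_ne_bot [CompactSpace M] (hφ : Continuous φ) (hψ : Continuous ψ)
    {c : ℝ} (hc : fiberSup φ ψ c ≠ ⊥) : ∃ x, ψ x = c ∧ fiberSup φ ψ c = φ x := by
  have hne : {x | ψ x = c}.Nonempty := by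
    by_contra h
    refine hc (sSup_eq_bot.2 ?_)
    rintro _ ⟨x, hx, rfl⟩
    exact absurd ⟨x, hx⟩ h
  obtain ⟨x, hx, hmax⟩ := (isClosed_eq hψ continuous_const).isCompact.exists_isMaxOn hne
    hφ.continuousOn
  refine ⟨x, hx, le_antisymm (sSup_le ?_) (le_sSup ⟨x, hx, rfl⟩)⟩
  rintro _ ⟨y, hy, rfl⟩
  exact EReal.coe_le_coe_iff.2 (hmax hy)

lemma mul_add_mul_le_fiberSup [CompactSpace M] (hφ : Continuous φ) (hψ : Continuous ψ)
    (hH : Convex ℝ (hypograph φ ψ)) {c c' lam : ℝ} (h0 : 0 ≤ lam) (h1 : lam ≤ 1)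
    (hc : fiberSup φ ψ c ≠ ⊥) (hc' : fiberSup φ ψ c' ≠ ⊥) :
    (lam : EReal) * fiberSup φ ψ c + ((1 - lam : ℝ) : EReal) * fiberSup φ ψ c' ≤
      fiberSup φ ψ (lam * c + (1 - lam) * c') := by
  obtain ⟨x, rfl, hx⟩ := exists_eq_fiberSup_of_ne_bot hφ hψ hc
  obtain ⟨x', rfl, hx'⟩ := exists_eq_fiberSup_of_ne_bot hφ hψ hc'
  obtain ⟨y, hy, hyφ⟩ := hH (⟨x, rfl, le_rfl⟩ : (φ x, ψ x) ∈ hypograph φ ψ)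
    (⟨x', rfl, le_rfl⟩ : (φ x', ψ x') ∈ hypograph φ ψ) h0 (sub_nonneg.2 h1) (add_sub_cancel _ _)
  simp only [Prod.fst_add, Prod.snd_add, Prod.smul_mk, smul_eq_mul] at hy hyφ
  rw [hx, hx']
  calc (lam : EReal) * (φ x : EReal) + ((1 - lam : ℝ) : EReal) * (φ x' : EReal)
      = ((lam * φ x + (1 - lam) * φ x' : ℝ) : EReal) := by norm_cast
    _ ≤ φ y := EReal.coe_le_coe_iff.2 hyφ
    _ ≤ fiberSup φ ψ (lam * ψ x + (1 - lam) * ψ x') := le_sSup ⟨y, hy, rfl⟩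

end Topology

end

theorem stmt_6 {M : Type*} [TopologicalSpace M] [CompactSpace M]
    (f : M → ℝ × ℝ) (hf : Continuous f)
    (hconn : ∀ t : ℝ × ℝ, 0 ≤ t.1 → t ≠ 0 →
      IsPreconnected {x : M | ∀ y : M,
        t.1 * (f y).1 + t.2 * (f y).2 ≤ t.1 * (f x).1 + t.2 * (f x).2})
    (V : ℝ → EReal)
    (hV : ∀ c, V c = sSup {y : EReal | ∃ x : M, (f x).2 = c ∧ y = (((f x).1 : ℝ) : EReal)}) :
    (∀ (c c' lam : ℝ), 0 ≤ lam → lam ≤ 1 → V c ≠ ⊥ → V c' ≠ ⊥ → V c ≠ ⊤ → V c' ≠ ⊤ →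
      (lam : EReal) * V c + ((1 - lam : ℝ) : EReal) * V c' ≤ V (lam * c + (1 - lam) * c')) ∧
    (∀ c : ℝ, V c = sSup {v : EReal |
      ∃ y ∈ convexHull ℝ (Set.range f), y.2 = c ∧ v = ((y.1 : ℝ) : EReal)}) := by
  have hf₁ : Continuous fun x => (f x).1 := continuous_fst.comp hf
  have hf₂ : Continuous fun x => (f x).2 := continuous_snd.comp hf
  have hH := convex_hypograph_of_isPreconnected hf₁ hf₂ fun s => by simpa using hconn (1, s) zero_le_one (by simp)
  obtain rfl : V = fiberSup (fun x => (f x).1) (fun x => (f x).2) := funext hV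
  refine ⟨fun c c' lam h0 h1 hc hc' _ _ => mul_add_mul_le_fiberSup hf₁ hf₂ hH h0 h1 hc hc', ?_⟩
  exact fiberSup_eq_sSup_of_subset_hypograph (fun x => subset_convexHull ℝ _ (mem_range_self x))
    (convexHull_min (range_subset_iff.2 fun x => ⟨x, rfl, le_rfl⟩) hH)
end

section
/- Let M ⊆ ℝ^N be a compact set and f : ℝ^N → ℝ^{k+1} a linear map. If the value function V_f(c) = sup { f_0(x) : f_1(x) = c_1, …, f_k(x) = c_k, x ∈ M } is concave, then for all c ∈ ℝ^k, V_f(c) = sup { f_0(x) : f_1(x) = c_1, …, f_k(x) = c_k, x ∈ conv(M) }. -/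
/-!
Write `A x = (f₁ x, …, f_k x)`. Compactness of `M` makes `V` bounded above, so concavity of `V`
makes its hypograph `{(c, t) | t ≤ V c}` convex. Each `x ∈ M` satisfies `f₀ x ≤ V (A x)`, i.e. the
linear map `x ↦ (A x, f₀ x)` sends `M` into the hypograph; the preimage of the hypograph is convex,
so it contains `conv M`, which is the nontrivial inequality.
-/

theorem convex_hypograph_of_ereal_concave {F : Type*} [AddCommGroup F] [Module ℝ F]
    {V : F → EReal} (hV_ne_top : ∀ c, V c ≠ ⊤)
    (hconc : ∀ (c c' : F) (lam : ℝ), 0 ≤ lam → lam ≤ 1 →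
      V c ≠ ⊥ → V c' ≠ ⊥ → V c ≠ ⊤ → V c' ≠ ⊤ →
      (lam : EReal) * V c + ((1 - lam : ℝ) : EReal) * V c' ≤ V (lam • c + (1 - lam) • c')) :
    Convex ℝ {p : F × ℝ | (p.2 : EReal) ≤ V p.1} := by
  rintro ⟨c, t⟩ (ht : (t : EReal) ≤ V c) ⟨c', t'⟩ (ht' : (t' : EReal) ≤ V c') a b ha hb hab
  obtain rfl : b = 1 - a := by linarith
  have hbot : V c ≠ ⊥ := ne_bot_of_le_ne_bot (EReal.coe_ne_bot t) ht
  have hbot' : V c' ≠ ⊥ := ne_bot_of_le_ne_bot (EReal.coe_ne_bot t') ht'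
  have hle := hconc c c' a ha (by linarith) hbot hbot' (hV_ne_top c) (hV_ne_top c')
  obtain ⟨u, hu⟩ : ∃ u : ℝ, V c = u := ⟨_, (EReal.coe_toReal (hV_ne_top c) hbot).symm⟩
  obtain ⟨u', hu'⟩ : ∃ u' : ℝ, V c' = u' := ⟨_, (EReal.coe_toReal (hV_ne_top c') hbot').symm⟩
  rw [hu, EReal.coe_le_coe_iff] at ht
  rw [hu', EReal.coe_le_coe_iff] at ht'
  rw [hu, hu'] at hle
  show ((a * t + (1 - a) * t' : ℝ) : EReal) ≤ V (a • c + (1 - a) • c')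
  refine le_trans ?_ hle
  rw [← EReal.coe_mul, ← EReal.coe_mul, ← EReal.coe_add, EReal.coe_le_coe_iff]
  gcongr

theorem stmt_7 {N k : ℕ} (M : Set (Fin N → ℝ)) (hM : IsCompact M)
    (f : (Fin N → ℝ) →ₗ[ℝ] (Fin (k + 1) → ℝ))
    (V : (Fin k → ℝ) → EReal)
    (hV : ∀ c, V c = sSup {y : EReal |
      ∃ x ∈ M, (∀ i : Fin k, f x i.succ = c i) ∧ y = ((f x 0 : ℝ) : EReal)})
    (hconc : ∀ (c c' : Fin k → ℝ) (lam : ℝ), 0 ≤ lam → lam ≤ 1 →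
      V c ≠ ⊥ → V c' ≠ ⊥ → V c ≠ ⊤ → V c' ≠ ⊤ →
      (lam : EReal) * V c + ((1 - lam : ℝ) : EReal) * V c' ≤
        V (fun i => lam * c i + (1 - lam) * c' i)) :
    ∀ c : Fin k → ℝ, V c = sSup {y : EReal |
      ∃ x ∈ convexHull ℝ M, (∀ i : Fin k, f x i.succ = c i) ∧ y = ((f x 0 : ℝ) : EReal)} := by
  let A : (Fin N → ℝ) →ₗ[ℝ] (Fin k → ℝ) := LinearMap.pi fun i => LinearMap.proj i.succ ∘ₗ f
  let φ : (Fin N → ℝ) →ₗ[ℝ] ℝ := LinearMap.proj 0 ∘ₗ f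
  obtain ⟨B, hB⟩ := (hM.image φ.continuous_of_finiteDimensional).bddAbove
  have hV_ne_top : ∀ c, V c ≠ ⊤ := fun c => ne_top_of_le_ne_top (EReal.coe_ne_top B) <| by
    rw [hV c]
    refine sSup_le ?_
    rintro _ ⟨x, hx, -, rfl⟩
    exact EReal.coe_le_coe_iff.2 (hB ⟨x, hx, rfl⟩)
  have hconvex := convex_hypograph_of_ereal_concave hV_ne_top hconc
  have hle_on_M : M ⊆ (A.prod φ) ⁻¹' {p | (p.2 : EReal) ≤ V p.1} := fun x hx => by
    show ((f x 0 : ℝ) : EReal) ≤ V (A x)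
    rw [hV]
    exact le_sSup ⟨x, hx, fun i => rfl, rfl⟩
  have hle_on_hull := convexHull_min hle_on_M (hconvex.linear_preimage _)
  intro c
  rw [hV c]
  refine le_antisymm (sSup_le_sSup ?_) (sSup_le ?_)
  · rintro _ ⟨x, hx, hxc, rfl⟩
    exact ⟨x, subset_convexHull ℝ M hx, hxc, rfl⟩
  · rintro _ ⟨x, hx, hxc, rfl⟩
    have hAx : A x = c := funext hxc
    rw [← hV c, ← hAx]
    exact hle_on_hull hx
end

section
/- Let M be a compact metric space and suppose f̃ = (f̃_0, f̃_1, …, f̃_k) : M → ℝ^{k+1} is continuous and uniquely maximized, i.e. for every t ∈ ℝ^{k+1}_{0+} the function x ↦ ⟨t, f̃(x)⟩ has a unique maximizer on M. If g : ℝ → ℝ is continuous, monotonically increasing, and strictly concave, then the function f(x) = (g(f̃_0(x)), f̃_1(x), …, f̃_k(x)) is also uniquely maximized. -/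
/-!
Put `u = f̃₀`, `v = ∑_{i ≥ 1} tᵢ f̃ᵢ` and `G = t₀ g`. For `t₀ = 0` there is nothing to prove. For
`t₀ > 0` every `c u + v` with `c > 0` has a unique maximizer `z c`, and `G ∘ u + v`, with `G`
concave and strictly increasing, has to have one too.

A maximizer `x` of `G ∘ u + v` maximizes some `c u + v`: for `c` below a secant slope of `G` at
`u x` the point `z c` has `u (z c) ≤ u x`, for `c` above one `u (z c) ≥ u x`, and since
`{c | u (z c) ≤ u x}` and `{c | u (z c) ≥ u x}` are closed (projection along the compact `M`),
connectedness of `(0, ∞)` gives a `c` with `u (z c) = u x`, hence `z c = x`.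
If `p ≠ q` both maximize `G ∘ u + v`, they tie for `σ u + v` with `σ` the secant slope of `G`
between `u p < u q`. Since `c ↦ u (z c)` is monotone, `u (z σ) ∈ [u p, u q]`, where `G` lies above
that secant, so `z σ` beats `p` for `G ∘ u + v`.
-/

open Set

lemma ConcaveOn.secant_le {G : ℝ → ℝ} (hG : ConcaveOn ℝ univ G) {a b s : ℝ} (hab : a < b)
    (has : a ≤ s) (hsb : s ≤ b) : G a + (G b - G a) / (b - a) * (s - a) ≤ G s := by
  rcases has.eq_or_lt with rfl | has
  · simp
  have hslope := hG.antitoneOn_slope_gt (mem_univ a) ⟨mem_univ s, has⟩ ⟨mem_univ b, hab⟩ hsb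
  rw [slope_def_field, slope_def_field, le_div_iff₀ (sub_pos.2 has)] at hslope
  linarith

section LinearPerturbation

variable {M : Type*} {u v : M → ℝ}

lemma le_of_maximizes_of_lt {c c' : ℝ} {z z' : M} (hcc' : c < c')
    (hz : ∀ w, c * u w + v w ≤ c * u z + v z) (hz' : ∀ w, c' * u w + v w ≤ c' * u z' + v z') :
    u z ≤ u z' := by
  nlinarith [hz z', hz' z]

lemma isClosed_setOf_exists_maximizes [TopologicalSpace M] [CompactSpace M]
    (hu : Continuous u) (hv : Continuous v) {P : M → Prop} (hP : IsClosed {z | P z}) :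
    IsClosed {c : ℝ | ∃ z, P z ∧ ∀ w, c * u w + v w ≤ c * u z + v z} := by
  have hgraph : IsClosed ({p : ℝ × M | P p.2} ∩
      ⋂ w, {p | p.1 * u w + v w ≤ p.1 * u p.2 + v p.2}) :=
    (hP.preimage continuous_snd).inter <| isClosed_iInter fun w =>
      isClosed_le (by fun_prop) (by fun_prop)
  convert isClosedMap_fst_of_compactSpace _ hgraph using 1
  ext c
  simp

lemma lt_of_maximizes_of_ne
    (hH : ∀ c : ℝ, 0 < c → ∃! x : M, ∀ w, c * u w + v w ≤ c * u x + v x)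
    {c : ℝ} (hc : 0 < c) {z w : M}
    (hz : ∀ y, c * u y + v y ≤ c * u z + v z) (hw : w ≠ z) :
    c * u w + v w < c * u z + v z :=
  (hz w).lt_of_ne fun h => hw <| (hH c hc).unique (fun y => h ▸ hz y) hz

section Secant

variable {G : ℝ → ℝ} {c : ℝ} {x z : M}

lemma le_of_maximizes_of_lt_secant (hconc : ConcaveOn ℝ univ G)
    (hx : ∀ w, G (u w) + v w ≤ G (u x) + v x) (hz : ∀ w, c * u w + v w ≤ c * u z + v z)
    {b : ℝ} (hzb : u z ≤ b) (hc : c < (G b - G (u x)) / (b - u x)) :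
    u z ≤ u x := by
  by_contra! hxz
  have := hconc.secant_le (hxz.trans_le hzb) hxz.le hzb
  nlinarith [hx z, hz x]

lemma le_of_maximizes_of_secant_lt (hconc : ConcaveOn ℝ univ G)
    (hx : ∀ w, G (u w) + v w ≤ G (u x) + v x) (hz : ∀ w, c * u w + v w ≤ c * u z + v z)
    {b : ℝ} (hbz : b ≤ u z) (hc : (G (u x) - G b) / (u x - b) < c) :
    u x ≤ u z := by
  by_contra! hzx
  have hbx : b < u x := hbz.trans_lt hzx
  have := hconc.secant_le hbx hbz hzx.le
  have hσ : (G (u x) - G b) / (u x - b) * (u x - b) = G (u x) - G b :=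
    div_mul_cancel₀ _ (sub_pos.2 hbx).ne'
  nlinarith [hx z, hz x]

end Secant

variable [TopologicalSpace M] [CompactSpace M] {G : ℝ → ℝ}

lemma exists_pos_maximizes_of_maximizes_comp_add
    (hH : ∀ c : ℝ, 0 < c → ∃! x : M, ∀ w, c * u w + v w ≤ c * u x + v x)
    (hu : Continuous u) (hv : Continuous v) (hmono : StrictMono G)
    (hconc : ConcaveOn ℝ univ G) {x : M} (hx : ∀ w, G (u w) + v w ≤ G (u x) + v x) :
    ∃ c, 0 < c ∧ ∀ w, c * u w + v w ≤ c * u x + v x := by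
  set a := u x
  obtain ⟨R, hR⟩ := (isCompact_range hu).bddAbove
  obtain ⟨m, hm⟩ := (isCompact_range hu).bddBelow
  have haR : a ≤ R := hR (mem_range_self x)
  have hma : m ≤ a := hm (mem_range_self x)
  set σR := (G (R + 1) - G a) / (R + 1 - a)
  have hσR : 0 < σR := div_pos (sub_pos.2 (hmono (by linarith))) (by linarith)
  set σL := (G a - G (m - 1)) / (a - (m - 1))
  have hσL : 0 < σL + 1 :=
    (div_pos (sub_pos.2 (hmono (by linarith))) (by linarith)).trans (lt_add_one σL)
  obtain ⟨c, hc, ⟨z₁, hz₁a, hz₁⟩, ⟨z₂, hz₂a, hz₂⟩⟩ :=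
    isPreconnected_closed_iff.1 isPreconnected_Ioi
      {c : ℝ | ∃ z, u z ≤ a ∧ ∀ w, c * u w + v w ≤ c * u z + v z}
      {c : ℝ | ∃ z, a ≤ u z ∧ ∀ w, c * u w + v w ≤ c * u z + v z}
      (isClosed_setOf_exists_maximizes hu hv (isClosed_le hu continuous_const))
      (isClosed_setOf_exists_maximizes hu hv (isClosed_le continuous_const hu))
      (fun c hc => by
        obtain ⟨z, hz, -⟩ := hH c hc
        exact (le_total (u z) a).imp (fun h => ⟨z, h, hz⟩) (fun h => ⟨z, h, hz⟩))
      ⟨σR / 2, half_pos hσR, (hH _ (half_pos hσR)).exists.imp fun z hz =>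
        ⟨le_of_maximizes_of_lt_secant hconc hx hz (by linarith [hR (mem_range_self z)])
          (half_lt_self hσR), hz⟩⟩
      ⟨σL + 1, hσL, (hH _ hσL).exists.imp fun z hz =>
        ⟨le_of_maximizes_of_secant_lt hconc hx hz (by linarith [hm (mem_range_self z)])
          (lt_add_one σL), hz⟩⟩
  have hz₁₂ : z₁ = z₂ := (hH c hc).unique hz₁ hz₂
  have hz₁u : u z₁ = a := le_antisymm hz₁a (hz₁₂ ▸ hz₂a)
  refine ⟨c, hc, fun w => ?_⟩
  have := hx z₁
  rw [hz₁u] at this hz₁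
  linarith [hz₁ w]

lemma le_of_maximizes_comp_add
    (hH : ∀ c : ℝ, 0 < c → ∃! x : M, ∀ w, c * u w + v w ≤ c * u x + v x) (hu : Continuous u)
    (hv : Continuous v) (hmono : StrictMono G) (hconc : ConcaveOn ℝ univ G) {p q : M}
    (hp : ∀ w, G (u w) + v w ≤ G (u p) + v p) (hq : ∀ w, G (u w) + v w ≤ G (u q) + v q) :
    u q ≤ u p := by
  by_contra! hpq
  have hqp : q ≠ p := fun h => hpq.ne' (congrArg u h)
  obtain ⟨cp, hcp, hp'⟩ := exists_pos_maximizes_of_maximizes_comp_add hH hu hv hmono hconc hp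
  obtain ⟨cq, hcq, hq'⟩ := exists_pos_maximizes_of_maximizes_comp_add hH hu hv hmono hconc hq
  have hv_sub : v p - v q = G (u q) - G (u p) := by linarith [hp q, hq p]
  set σ := (G (u q) - G (u p)) / (u q - u p)
  have hσ : σ * (u q - u p) = G (u q) - G (u p) := div_mul_cancel₀ _ (sub_pos.2 hpq).ne'
  have hσpos : 0 < σ := div_pos (sub_pos.2 (hmono hpq)) (sub_pos.2 hpq)
  have hcpσ : cp < σ := by
    have := lt_of_maximizes_of_ne hH hcp hp' hqp
    nlinarith
  have hσcq : σ < cq := by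
    have := lt_of_maximizes_of_ne hH hcq hq' hqp.symm
    nlinarith
  obtain ⟨z, hz, -⟩ := hH σ hσpos
  -- `p` and `q` tie for `σ u + v`, so at least one of them, hence both, lose to `z`.
  have hzp : σ * u p + v p < σ * u z + v z := by
    by_cases hpz : p = z
    · linarith [lt_of_maximizes_of_ne hH hσpos hz (hpz ▸ hqp)]
    · exact lt_of_maximizes_of_ne hH hσpos hz hpz
  have := hconc.secant_le hpq (le_of_maximizes_of_lt hcpσ hp' hz)
    (le_of_maximizes_of_lt hσcq hz hq')
  linarith [hp z]

theorem existsUnique_maximizes_comp_add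
    (hH : ∀ c : ℝ, 0 < c → ∃! x : M, ∀ w, c * u w + v w ≤ c * u x + v x) (hu : Continuous u)
    (hv : Continuous v) (hG : Continuous G) (hmono : StrictMono G)
    (hconc : ConcaveOn ℝ univ G) :
    ∃! x : M, ∀ w, G (u w) + v w ≤ G (u x) + v x := by
  obtain ⟨x₀, -⟩ := hH 1 one_pos
  obtain ⟨x, -, hx⟩ := isCompact_univ.exists_isMaxOn ⟨x₀, mem_univ _⟩
    ((hG.comp hu).add hv).continuousOn
  replace hx : ∀ w, G (u w) + v w ≤ G (u x) + v x := fun w => hx (mem_univ w)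
  refine ⟨x, hx, fun y hy => ?_⟩
  have hux : u y = u x := le_antisymm (le_of_maximizes_comp_add hH hu hv hmono hconc hx hy)
    (le_of_maximizes_comp_add hH hu hv hmono hconc hy hx)
  obtain ⟨c, hc, hxc⟩ := exists_pos_maximizes_of_maximizes_comp_add hH hu hv hmono hconc hx
  have hvx : v y = v x := by linarith [hx y, hy x, congrArg G hux]
  exact (hH c hc).unique (fun w => by rw [hux, hvx]; exact hxc w) hxc

end LinearPerturbation

lemma sum_mul_update_zero {k : ℕ} (t f : Fin (k + 1) → ℝ) (r : ℝ) :
    ∑ i, t i * Function.update f 0 r i = t 0 * r + ∑ i : Fin k, t i.succ * f i.succ := by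
  simp [Fin.sum_univ_succ]

lemma sum_update_zero_mul {k : ℕ} (t f : Fin (k + 1) → ℝ) (c : ℝ) :
    ∑ i, Function.update t 0 c i * f i = c * f 0 + ∑ i : Fin k, t i.succ * f i.succ := by
  simp [Fin.sum_univ_succ]

theorem stmt_8 {k : ℕ} {M : Type*} [MetricSpace M] [CompactSpace M]
    (ft : M → Fin (k + 1) → ℝ) (hft : Continuous ft)
    (huniq : ∀ t : Fin (k + 1) → ℝ, 0 ≤ t 0 → t ≠ 0 →
      ∃! x : M, ∀ y : M, ∑ i, t i * ft y i ≤ ∑ i, t i * ft x i)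
    (g : ℝ → ℝ) (hg : Continuous g) (hmono : StrictMono g)
    (hconc : StrictConcaveOn ℝ Set.univ g) :
    ∀ t : Fin (k + 1) → ℝ, 0 ≤ t 0 → t ≠ 0 →
      ∃! x : M, ∀ y : M,
        ∑ i, t i * Function.update (ft y) 0 (g (ft y 0)) i ≤
        ∑ i, t i * Function.update (ft x) 0 (g (ft x 0)) i := by
  intro t ht0 ht
  set u : M → ℝ := fun w => ft w 0
  set v : M → ℝ := fun w => ∑ i : Fin k, t i.succ * ft w i.succ
  have hu : Continuous u := (continuous_apply 0).comp hft
  have hv : Continuous v := continuous_finsetSum _ fun i _ =>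
    continuous_const.mul ((continuous_apply i.succ).comp hft)
  simp only [sum_mul_update_zero]
  rcases ht0.eq_or_lt with h0 | h0
  · simpa only [Fin.sum_univ_succ, ← h0, zero_mul, zero_add] using huniq t ht0 ht
  have hH : ∀ c : ℝ, 0 < c → ∃! x : M, ∀ w, c * u w + v w ≤ c * u x + v x := by
    intro c hc
    have ht' : Function.update t 0 c ≠ 0 := fun h => hc.ne' (by simpa using congrFun h 0)
    simpa only [sum_update_zero_mul] using huniq _ (by simpa using hc.le) ht'
  exact existsUnique_maximizes_comp_add (G := fun s => t 0 * g s) hH hu hv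
    (continuous_const.mul hg) (hmono.const_mul h0) (hconc.concaveOn.smul ht0)
end

section
/- Let B ∈ ℝ^{n×2} have singular values σ_1(B) ≥ σ_2(B), and let Π_B ∈ ℝ^{n×2} be a matrix of orthonormal left singular vectors of B. Then for every Z in the Grassmannian Gr^{n,2} = {Z ∈ ℝ^{n×n}_{sym} : Z² = Z, Tr(Z) = 2}, the trace norm satisfies ‖BᵀZ‖_1 = √( Tr(BBᵀZ) + 2σ_1(B)σ_2(B)√(det(Π_BᵀZΠ_B)) ). -/
theorem stmt_13 {n : ℕ} (B PiB : Matrix (Fin n) (Fin 2) ℝ)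
    (σ1 σ2 : ℝ) (hσ12 : σ2 ≤ σ1) (hσ2 : 0 ≤ σ2)
    (V : Matrix (Fin 2) (Fin 2) ℝ) (hV : V.transpose * V = 1)
    (hPi : PiB.transpose * PiB = 1)
    (hB : B = PiB * Matrix.diagonal ![σ1, σ2] * V.transpose)
    (Z : Matrix (Fin n) (Fin n) ℝ) (hZsym : Z.IsSymm) (hZproj : Z * Z = Z)
    (hZtr : Z.trace = 2)
    (s1 s2 : ℝ) (hs12 : s2 ≤ s1) (hs2 : 0 ≤ s2)
    (Uo : Matrix (Fin 2) (Fin 2) ℝ) (hUo : Uo.transpose * Uo = 1)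
    (Po : Matrix (Fin 2) (Fin n) ℝ) (hPo : Po * Po.transpose = 1)
    (hSVD : B.transpose * Z = Uo * Matrix.diagonal ![s1, s2] * Po) :
    s1 + s2 = Real.sqrt ((B * B.transpose * Z).trace +
      2 * σ1 * σ2 * Real.sqrt ((PiB.transpose * Z * PiB).det)) := by
  have hZt : Z.transpose = Z := hZsym
  set Ds := Matrix.diagonal ![s1, s2] with hDs
  set Dσ := Matrix.diagonal ![σ1, σ2] with hDσ
  have hDσt : Dσ.transpose = Dσ := Matrix.diagonal_transpose _
  have hσ1 : 0 ≤ σ1 := hσ2.trans hσ12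
  have hs1 : 0 ≤ s1 := hs2.trans hs12
  -- BᵀZB = (BᵀZ)(BᵀZ)ᵀ
  have h1 : B.transpose * Z * B
      = (B.transpose * Z) * (B.transpose * Z).transpose := by
    rw [Matrix.transpose_mul, Matrix.transpose_transpose, hZt]
    simp only [Matrix.mul_assoc]
    rw [← Matrix.mul_assoc Z Z B, hZproj]
  -- via the SVD of BᵀZ
  have hMMt : B.transpose * Z * B = Uo * (Ds * Ds) * Uo.transpose := by
    rw [h1, hSVD, Matrix.transpose_mul, Matrix.transpose_mul,
        Matrix.diagonal_transpose, ← hDs]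
    simp only [Matrix.mul_assoc]
    rw [← Matrix.mul_assoc Po, hPo, Matrix.one_mul]
  -- via the SVD of B
  have hBZB : B.transpose * Z * B
      = V * (Dσ * ((PiB.transpose * Z * PiB) * (Dσ * V.transpose))) := by
    subst hB
    simp only [Matrix.transpose_mul, Matrix.transpose_transpose,
      Matrix.diagonal_transpose, ← hDσ, hDσt, Matrix.mul_assoc]
  -- trace
  have htr : (B * B.transpose * Z).trace = s1 ^ 2 + s2 ^ 2 := by
    have hc := Matrix.trace_mul_cycle B.transpose Z B
    rw [← hc, hMMt, Matrix.trace_mul_cycle, hUo, Matrix.one_mul, hDs,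
        Matrix.diagonal_mul_diagonal]
    simp [Matrix.trace_diagonal, Fin.sum_univ_two]
    ring
  -- determinant identities
  have hdU : Uo.det * Uo.det = 1 := by
    have := congrArg Matrix.det hUo
    simpa [Matrix.det_transpose] using this
  have hdV : V.det * V.det = 1 := by
    have := congrArg Matrix.det hV
    simpa [Matrix.det_transpose] using this
  have hdDs : Ds.det = s1 * s2 := by
    simp [hDs, Matrix.det_diagonal, Fin.prod_univ_two]
  have hdDσ : Dσ.det = σ1 * σ2 := by
    simp [hDσ, Matrix.det_diagonal, Fin.prod_univ_two]
  have hdet : (s1 * s2) ^ 2 = (σ1 * σ2) ^ 2 * (PiB.transpose * Z * PiB).det := by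
    have e1 : (B.transpose * Z * B).det = Uo.det * (s1 * s2 * (s1 * s2)) * Uo.det := by
      rw [hMMt]
      simp [Matrix.det_mul, Matrix.det_transpose, hdDs]
    have e2 : (B.transpose * Z * B).det
        = V.det * (σ1 * σ2 * ((PiB.transpose * Z * PiB).det * (σ1 * σ2 * V.det))) := by
      rw [hBZB]
      simp [Matrix.det_mul, Matrix.det_transpose, hdDσ]
    rw [e1] at e2
    nlinarith [e2, hdU, hdV]
  -- combine
  have hkey : σ1 * σ2 * Real.sqrt ((PiB.transpose * Z * PiB).det) = s1 * s2 := by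
    have h := Real.sqrt_mul (sq_nonneg (σ1 * σ2)) ((PiB.transpose * Z * PiB).det)
    rw [Real.sqrt_sq (mul_nonneg hσ1 hσ2)] at h
    rw [← h, ← hdet, Real.sqrt_sq (mul_nonneg hs1 hs2)]
  have h2 : (B * B.transpose * Z).trace
      + 2 * σ1 * σ2 * Real.sqrt ((PiB.transpose * Z * PiB).det)
      = (s1 + s2) ^ 2 := by
    rw [htr, show (2:ℝ) * σ1 * σ2 * Real.sqrt ((PiB.transpose * Z * PiB).det)
        = 2 * (σ1 * σ2 * Real.sqrt ((PiB.transpose * Z * PiB).det)) by ring, hkey]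
    ring
  rw [h2, Real.sqrt_sq (by linarith)]
end

section
/- Let C ⊆ ℝ^{k+1} be a compact convex set containing 0 in its interior, and let C° = {t ∈ ℝ^{k+1} : ⟨t, y⟩ ≤ 1 for all y ∈ C} be its polar. Then for every c ∈ ℝ^k such that the set {y ∈ C : y_i = c_i for i = 1,…,k} is nonempty, sup { y_0 : y ∈ C, y_1 = c_1, …, y_k = c_k } = inf { (1 − Σ_{i=1}^k c_i t_i)/t_0 : t ∈ C°, t_0 > 0 }. -/
open scoped BigOperators

theorem stmt_16 {k : ℕ} (C : Set (Fin (k + 1) → ℝ)) (hC : IsCompact C)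
    (hconv : Convex ℝ C) (h0 : (0 : Fin (k + 1) → ℝ) ∈ interior C)
    (c : Fin k → ℝ) (hne : ∃ y ∈ C, ∀ i : Fin k, y i.succ = c i) :
    sSup {r : ℝ | ∃ y ∈ C, (∀ i : Fin k, y i.succ = c i) ∧ r = y 0} =
    sInf {r : ℝ | ∃ t : Fin (k + 1) → ℝ, (∀ y ∈ C, ∑ i, t i * y i ≤ 1) ∧ 0 < t 0 ∧
      r = (1 - ∑ i : Fin k, c i * t i.succ) / t 0} := by
  set S : Set ℝ := {r : ℝ | ∃ y ∈ C, (∀ i : Fin k, y i.succ = c i) ∧ r = y 0} with hS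
  set T : Set ℝ := {r : ℝ | ∃ t : Fin (k + 1) → ℝ, (∀ y ∈ C, ∑ i, t i * y i ≤ 1) ∧ 0 < t 0 ∧
      r = (1 - ∑ i : Fin k, c i * t i.succ) / t 0} with hT
  have h0C : (0 : Fin (k + 1) → ℝ) ∈ C := interior_subset h0
  -- S nonempty
  obtain ⟨y₀, hy₀C, hy₀c⟩ := hne
  have hSne : S.Nonempty := ⟨y₀ 0, y₀, hy₀C, hy₀c, rfl⟩
  -- bound on C
  obtain ⟨R, hR⟩ := hC.isBounded.subset_ball 0
  have hRle : ∀ y ∈ C, |y 0| ≤ R := by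
    intro y hy
    have := hR hy
    rw [Metric.mem_ball, dist_zero_right] at this
    calc |y 0| ≤ ‖y‖ := by
          simpa using norm_le_pi_norm y 0
      _ ≤ R := this.le
  have hRpos : 0 < R := by
    have := hR h0C
    simpa using this
  -- T nonempty : take t = (1/(R+1), 0, ..., 0)
  have hTne : T.Nonempty := by
    refine ⟨_, (fun i => if i = 0 then 1 / (R + 1) else 0), ?_, by norm_num; linarith, rfl⟩
    intro y hy
    have h1 : ∑ i : Fin (k + 1), (if i = 0 then 1 / (R + 1) else 0) * y i
        = 1 / (R + 1) * y 0 := by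
      rw [Finset.sum_eq_single 0]
      · simp
      · intro b _ hb; simp [hb]
      · simp
    rw [h1]
    have hy0 : y 0 ≤ R := (abs_le.mp (hRle y hy)).2
    rw [div_mul_eq_mul_div, one_mul, div_le_one (by linarith)]
    linarith
  -- cross inequality
  have hcross : ∀ r ∈ S, ∀ s ∈ T, r ≤ s := by
    rintro r ⟨y, hyC, hyc, rfl⟩ s ⟨t, ht, ht0, rfl⟩
    have hsum := ht y hyC
    rw [Fin.sum_univ_succ] at hsum
    have h2 : ∑ i : Fin k, t i.succ * y i.succ = ∑ i : Fin k, c i * t i.succ := by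
      apply Finset.sum_congr rfl
      intro i _
      rw [hyc i, mul_comm]
    rw [h2] at hsum
    rw [le_div_iff₀ ht0]
    linarith
  have hbddS : BddAbove S := by
    obtain ⟨s, hs⟩ := hTne
    exact ⟨s, fun r hr => hcross r hr s hs⟩
  have hbddT : BddBelow T := ⟨y₀ 0, fun s hs => hcross _ ⟨y₀, hy₀C, hy₀c, rfl⟩ s hs⟩
  refine le_antisymm (csSup_le hSne fun r hr => le_csInf hTne fun s hs => hcross r hr s hs) ?_
  -- hard direction
  by_contra hlt
  push_neg at hlt
  set M : ℝ := (sSup S + sInf T) / 2 with hM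
  have hM1 : sSup S < M := by rw [hM]; linarith
  have hM2 : M < sInf T := by rw [hM]; linarith
  set z : Fin (k + 1) → ℝ := Fin.cons M c with hz
  have hzC : z ∉ C := by
    intro hzc
    have : z 0 ∈ S := ⟨z, hzc, fun i => by simp [hz], rfl⟩
    have := le_csSup hbddS this
    simp only [hz, Fin.cons_zero] at this
    linarith
  obtain ⟨f, u, hfC, hfz⟩ := geometric_hahn_banach_closed_point hconv hC.isClosed hzC
  have hu : 0 < u := by
    have := hfC 0 h0C
    simpa using this
  set t : Fin (k + 1) → ℝ := fun i => f (fun j => if i = j then 1 else 0) / u with ht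
  have hft : ∀ y : Fin (k + 1) → ℝ, ∑ i, t i * y i = f y / u := by
    intro y
    have : f y = ∑ i, y i * f (fun j => if i = j then 1 else 0) := by
      conv_lhs => rw [pi_eq_sum_univ y, map_sum]
      apply Finset.sum_congr rfl
      intro i _
      rw [map_smul]
      rfl
    rw [this, Finset.sum_div]
    apply Finset.sum_congr rfl
    intro i _
    rw [ht]
    ring
  have htpolar : ∀ y ∈ C, ∑ i, t i * y i ≤ 1 := by
    intro y hy
    rw [hft y, div_le_one hu]
    exact (hfC y hy).le
  have htz : 1 < ∑ i, t i * z i := by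
    rw [hft z, lt_div_iff₀ hu, one_mul]
    exact hfz
  -- expand sums
  have hzexp : ∑ i, t i * z i = t 0 * M + ∑ i : Fin k, c i * t i.succ := by
    rw [Fin.sum_univ_succ]
    simp only [hz, Fin.cons_zero, Fin.cons_succ]
    congr 1
    exact Finset.sum_congr rfl fun i _ => mul_comm _ _
  have hyexp : ∑ i, t i * y₀ i = t 0 * y₀ 0 + ∑ i : Fin k, c i * t i.succ := by
    rw [Fin.sum_univ_succ]
    congr 1
    apply Finset.sum_congr rfl
    intro i _
    rw [hy₀c i, mul_comm]
  have hy₀le : y₀ 0 ≤ sSup S := le_csSup hbddS ⟨y₀, hy₀C, hy₀c, rfl⟩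
  have hy₀sum := htpolar y₀ hy₀C
  rw [hyexp] at hy₀sum
  rw [hzexp] at htz
  have ht0 : 0 < t 0 := by
    nlinarith
  have hmem : (1 - ∑ i : Fin k, c i * t i.succ) / t 0 ∈ T := ⟨t, htpolar, ht0, rfl⟩
  have h1 := csInf_le hbddT hmem
  have h2 : (1 - ∑ i : Fin k, c i * t i.succ) / t 0 < M := by
    rw [div_lt_iff₀ ht0]
    nlinarith
  linarith
end

section
/- Let M ⊆ ℝ^N be compact, f : M → ℝ^{k+1} continuous with a Lagrangian dual section D, and suppose C = conv(f_CM(M)) ⊆ ℝ^k is full-dimensional, where f_CM = (f_1, …, f_k). Then the map φ : H_k → C defined by φ(t) = f_CM(D(t)), where H_k = {t ∈ ℝ^{k+1} : t_0 ≥ 0, ‖t‖ = 1}, is surjective. -/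
/-!
For `s ∈ ℝᵏ` let `E s := D (T s)`, where `T s` is the unit vector in direction `(1, s)`.
By the maximality of `D`, `h s := f₀ (E s) + ⟪s, f_CM (E s)⟫` is a convex function of which
`f_CM (E s)` is a continuous subgradient at `s`. If `y` is an interior point of `C`, then
`h s - ⟪s, y⟫` grows linearly in `‖s‖`, so it attains its minimum at some `s₀`, where the continuous
subgradient `f_CM (E s₀) - y` has to vanish. Hence `φ` hits the interior of `C`; its image is
compact, and `C` is the closure of its interior.
-/

open Matrix Filter Topology

section DotProduct

variable {ι : Type*} [Fintype ι]

lemma norm_le_sum_abs (s : ι → ℝ) : ‖s‖ ≤ ∑ i, |s i| :=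
  (pi_norm_le_iff_of_nonneg (Finset.sum_nonneg fun i _ => abs_nonneg (s i))).2 fun i =>
    Finset.single_le_sum (f := fun i => |s i|) (fun i _ => abs_nonneg (s i)) (Finset.mem_univ i)

lemma dotProduct_add_mul_norm_le_of_closedBall {s y : ι → ℝ} {r c : ℝ} (hr : 0 ≤ r)
    (h : ∀ z ∈ Metric.closedBall y r, s ⬝ᵥ z ≤ c) : s ⬝ᵥ y + r * ‖s‖ ≤ c := by
  set σ : ι → ℝ := fun i => SignType.sign (s i)
  have hσ : ‖σ‖ ≤ 1 := (pi_norm_le_iff_of_nonneg zero_le_one).2 fun i => by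
    simp only [σ, Real.norm_eq_abs]
    cases SignType.sign (s i) <;> simp
  have hball : y + r • σ ∈ Metric.closedBall y r := by
    rw [Metric.mem_closedBall, dist_self_add_left, norm_smul, Real.norm_of_nonneg hr]
    exact mul_le_of_le_one_right hr hσ
  have hsσ : s ⬝ᵥ σ = ∑ i, |s i| := Finset.sum_congr rfl fun i _ => self_mul_sign (s i)
  calc s ⬝ᵥ y + r * ‖s‖ ≤ s ⬝ᵥ y + r * ∑ i, |s i| := by gcongr; exact norm_le_sum_abs s
    _ = s ⬝ᵥ (y + r • σ) := by rw [dotProduct_add, dotProduct_smul, hsσ, smul_eq_mul]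
    _ ≤ c := h _ hball

lemma eq_zero_of_isMin_of_subgradient {H : (ι → ℝ) → ℝ} {q : (ι → ℝ) → ι → ℝ}
    (hq : Continuous q) {s₀ : ι → ℝ} (hmin : ∀ s, H s₀ ≤ H s)
    (hsub : ∀ s, H s + (s₀ - s) ⬝ᵥ q s ≤ H s₀) : q s₀ = 0 := by
  set v := q s₀
  have hdir : ∀ ε > (0 : ℝ), v ⬝ᵥ q (s₀ - ε • v) ≤ 0 := fun ε hε => by
    have h := hsub (s₀ - ε • v)
    rw [sub_sub_cancel, smul_dotProduct, smul_eq_mul] at h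
    have := hmin (s₀ - ε • v)
    exact nonpos_of_mul_nonpos_right (by linarith) hε
  have hlim : Tendsto (fun ε : ℝ => v ⬝ᵥ q (s₀ - ε • v)) (𝓝[>] 0) (𝓝 (v ⬝ᵥ v)) := by
    have hcont : Continuous fun ε : ℝ => v ⬝ᵥ q (s₀ - ε • v) := by fun_prop
    simpa using (hcont.tendsto 0).mono_left nhdsWithin_le_nhds
  have hvv : v ⬝ᵥ v ≤ 0 := le_of_tendsto hlim (eventually_nhdsWithin_of_forall hdir)
  exact dotProduct_self_eq_zero.1
    (le_antisymm hvv (Finset.sum_nonneg fun i _ => mul_self_nonneg (v i)))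

lemma convexHull_subset_setOf_dotProduct_le {X : Type*} {b : X → ι → ℝ} {M : Set X} {s : ι → ℝ}
    {c : ℝ} (h : ∀ x ∈ M, s ⬝ᵥ b x ≤ c) : convexHull ℝ (b '' M) ⊆ {z | s ⬝ᵥ z ≤ c} :=
  convexHull_min (Set.image_subset_iff.2 h)
    (convex_halfSpace_le ⟨dotProduct_add s, fun r z => dotProduct_smul r s z⟩ c)

theorem exists_eq_of_mem_interior_convexHull {X : Type*} {M : Set X} {a : X → ℝ}
    {b : X → ι → ℝ} (ha : BddBelow (a '' M)) {E : (ι → ℝ) → X} (hEM : ∀ s, E s ∈ M)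
    (haE : Continuous fun s => a (E s)) (hbE : Continuous fun s => b (E s))
    (hE : ∀ s, ∀ x ∈ M, a x + s ⬝ᵥ b x ≤ a (E s) + s ⬝ᵥ b (E s)) {y : ι → ℝ}
    (hy : y ∈ interior (convexHull ℝ (b '' M))) : ∃ s, b (E s) = y := by
  obtain ⟨m, hm⟩ := ha
  obtain ⟨r, hr, hball⟩ := Metric.nhds_basis_closedBall.mem_iff.1 (mem_interior_iff_mem_nhds.1 hy)
  set H : (ι → ℝ) → ℝ := fun s => a (E s) + s ⬝ᵥ (b (E s) - y)
  have hcoercive : ∀ s, m + r * ‖s‖ ≤ H s := fun s => by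
    have hC := convexHull_subset_setOf_dotProduct_le (M := M) (b := b) (s := s)
      (c := a (E s) + s ⬝ᵥ b (E s) - m) fun x hx => by
        linarith [hE s x hx, hm (Set.mem_image_of_mem a hx)]
    have := dotProduct_add_mul_norm_le_of_closedBall hr.le fun z hz => hC (hball hz)
    simp only [H, dotProduct_sub]
    linarith
  have htendsto : Tendsto H (cocompact _) atTop :=
    tendsto_atTop_mono hcoercive <|
      tendsto_atTop_add_const_left _ m (tendsto_norm_cocompact_atTop.const_mul_atTop hr)
  have hH : Continuous H := haE.add (continuous_id.dotProduct (hbE.sub continuous_const))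
  obtain ⟨s₀, hs₀⟩ := hH.exists_forall_le htendsto
  have hsub : ∀ s, H s + (s₀ - s) ⬝ᵥ (b (E s) - y) ≤ H s₀ := fun s => by
    have := hE s₀ (E s) (hEM s)
    simp only [H, dotProduct_sub, sub_dotProduct]
    linarith
  exact ⟨s₀, sub_eq_zero.1 (eq_zero_of_isMin_of_subgradient (q := fun s => b (E s) - y)
    (hbE.sub continuous_const) hs₀ hsub)⟩

end DotProduct

lemma Convex.subset_of_interior_subset {E : Type*} [AddCommGroup E] [Module ℝ E]
    [TopologicalSpace E] [IsTopologicalAddGroup E] [ContinuousSMul ℝ E] {C A : Set E}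
    (hC : Convex ℝ C) (hint : (interior C).Nonempty) (hA : IsClosed A) (h : interior C ⊆ A) :
    C ⊆ A :=
  calc C ⊆ closure C := subset_closure
    _ = closure (interior C) := (hC.closure_interior_eq_closure_of_nonempty_interior hint).symm
    _ ⊆ A := closure_minimal h hA

def hemisphere (k : ℕ) : Set (Fin (k + 1) → ℝ) := {t | 0 ≤ t 0 ∧ ∑ i, t i ^ 2 = 1}

lemma isCompact_hemisphere (k : ℕ) : IsCompact (hemisphere k) := by
  refine (isCompact_closedBall 0 1).of_isClosed_subset ?_ fun t ht => ?_
  · exact (isClosed_le continuous_const (continuous_apply 0)).inter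
      (isClosed_eq (by fun_prop) continuous_const)
  · rw [mem_closedBall_zero_iff, pi_norm_le_iff_of_nonneg zero_le_one]
    intro i
    rw [Real.norm_eq_abs, ← sq_le_one_iff_abs_le_one, ← ht.2]
    exact Finset.single_le_sum (f := fun j => t j ^ 2) (fun j _ => sq_nonneg (t j))
      (Finset.mem_univ i)

lemma isCompact_preimage_val_hemisphere (k : ℕ) :
    IsCompact (Subtype.val ⁻¹' hemisphere k : Set {t : Fin (k + 1) → ℝ // 0 ≤ t 0 ∧ t ≠ 0}) := by
  refine (Topology.IsInducing.subtypeVal.isCompact_preimage_iff fun t ht => ?_).2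
    (isCompact_hemisphere k)
  refine ⟨⟨t, ht.1, fun h => ?_⟩, rfl⟩
  simpa [h] using ht.2

section Chart

variable {k : ℕ}

lemma one_add_dotProduct_self_pos (s : Fin k → ℝ) : 0 < 1 + s ⬝ᵥ s :=
  add_pos_of_pos_of_nonneg one_pos (Finset.sum_nonneg fun i _ => mul_self_nonneg (s i))

lemma sqrt_one_add_dotProduct_self_pos (s : Fin k → ℝ) : 0 < √(1 + s ⬝ᵥ s) :=
  Real.sqrt_pos_of_pos (one_add_dotProduct_self_pos s)

-- `D` need not be constant on rays, so the chart must land on unit vectors: the conclusion is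
-- about `D` at points of the hemisphere.
noncomputable def hemisphereChart (s : Fin k → ℝ) :
    {t : Fin (k + 1) → ℝ // 0 ≤ t 0 ∧ t ≠ 0} :=
  ⟨(√(1 + s ⬝ᵥ s))⁻¹ • vecCons 1 s, by
    have h0 : ((√(1 + s ⬝ᵥ s))⁻¹ • vecCons 1 s) 0 = (√(1 + s ⬝ᵥ s))⁻¹ := by simp
    have hpos := inv_pos.2 (sqrt_one_add_dotProduct_self_pos s)
    refine ⟨h0.symm ▸ hpos.le, fun h => hpos.ne' ?_⟩
    rw [← h0, h, Pi.zero_apply]⟩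

lemma hemisphereChart_dotProduct (s : Fin k → ℝ) (w : Fin (k + 1) → ℝ) :
    (hemisphereChart s).1 ⬝ᵥ w = (√(1 + s ⬝ᵥ s))⁻¹ * (w 0 + s ⬝ᵥ fun i => w i.succ) := by
  rw [hemisphereChart, smul_dotProduct, cons_dotProduct, one_mul, smul_eq_mul]
  rfl

lemma hemisphereChart_mem (s : Fin k → ℝ) : (hemisphereChart s).1 ∈ hemisphere k := by
  refine ⟨(hemisphereChart s).2.1, ?_⟩
  have hsq : ∑ i, (hemisphereChart s).1 i ^ 2 = (hemisphereChart s).1 ⬝ᵥ (hemisphereChart s).1 :=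
    Finset.sum_congr rfl fun i _ => sq _
  have hpos := one_add_dotProduct_self_pos s
  rw [hsq, hemisphereChart, smul_dotProduct, dotProduct_smul, cons_dotProduct_cons, one_mul,
    smul_eq_mul, smul_eq_mul, ← mul_assoc, ← mul_inv, Real.mul_self_sqrt hpos.le,
    inv_mul_cancel₀ hpos.ne']

lemma continuous_hemisphereChart : Continuous (hemisphereChart (k := k)) :=
  Continuous.subtype_mk (((by fun_prop : Continuous fun s : Fin k → ℝ => √(1 + s ⬝ᵥ s)).inv₀
    fun s => (sqrt_one_add_dotProduct_self_pos s).ne').smul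
    (continuous_const.matrixVecCons continuous_id)) _

end Chart

theorem stmt_18 {N k : ℕ} (M : Set (Fin N → ℝ)) (hM : IsCompact M)
    (f : (Fin N → ℝ) → (Fin (k + 1) → ℝ)) (hf : ContinuousOn f M)
    (D : {t : Fin (k + 1) → ℝ // 0 ≤ t 0 ∧ t ≠ 0} → (Fin N → ℝ))
    (hDmem : ∀ t, D t ∈ M) (hD : Continuous D)
    (hmax : ∀ t : {t : Fin (k + 1) → ℝ // 0 ≤ t 0 ∧ t ≠ 0}, ∀ x ∈ M,
      ∑ i, t.1 i * f x i ≤ ∑ i, t.1 i * f (D t) i)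
    (hfull : (interior (convexHull ℝ ((fun x => fun i : Fin k => f x i.succ) '' M))).Nonempty) :
    ∀ y ∈ convexHull ℝ ((fun x => fun i : Fin k => f x i.succ) '' M),
      ∃ t : {t : Fin (k + 1) → ℝ // 0 ≤ t 0 ∧ t ≠ 0},
        (∑ i, t.1 i ^ 2 = 1) ∧ (fun i : Fin k => f (D t) i.succ) = y := by
  have hfD : Continuous fun t => f (D t) := hf.comp_continuous hD hDmem
  have hfDchart := hfD.comp continuous_hemisphereChart
  have hlift : ∀ s, ∀ x ∈ M, f x 0 + s ⬝ᵥ (fun i => f x i.succ) ≤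
      f (D (hemisphereChart s)) 0 + s ⬝ᵥ fun i => f (D (hemisphereChart s)) i.succ :=
    fun s x hx => by
      have h := hmax (hemisphereChart s) x hx
      rw [← dotProduct, ← dotProduct, hemisphereChart_dotProduct, hemisphereChart_dotProduct] at h
      exact le_of_mul_le_mul_left h (inv_pos.2 (sqrt_one_add_dotProduct_self_pos s))
  have hinterior : interior (convexHull ℝ ((fun x => fun i : Fin k => f x i.succ) '' M)) ⊆
      (fun t => fun i : Fin k => f (D t) i.succ) '' (Subtype.val ⁻¹' hemisphere k) :=
    fun y hy => by
      obtain ⟨s, rfl⟩ := exists_eq_of_mem_interior_convexHull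
        (hM.bddBelow_image ((continuous_apply 0).comp_continuousOn hf))
        (b := fun x (i : Fin k) => f x i.succ) (E := fun s => D (hemisphereChart s))
        (fun s => hDmem _) ((continuous_apply 0).comp hfDchart)
        (continuous_pi fun i => (continuous_apply i.succ).comp hfDchart) hlift hy
      exact ⟨hemisphereChart s, hemisphereChart_mem s, rfl⟩
  have hclosed := ((isCompact_preimage_val_hemisphere k).image
    (continuous_pi fun i : Fin k => (continuous_apply i.succ).comp hfD)).isClosed
  intro y hy
  obtain ⟨t, ht, rfl⟩ :=
    (convex_convexHull ℝ _).subset_of_interior_subset hfull hclosed hinterior hy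
  exact ⟨t, ht.2, rfl⟩
end
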